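/- arXiv:2005.12337 — 10 statements merged into one kernel-verified Lean document; each statement's English description precedes it below -/
import Mathlib

section
/- For every finite poset P with n elements and every integer t ≥ 2, the local t-dimension of P is at least log_t(n). That is, every local t-realiser of P has maximum multiplicity at least log_t(n). -/
/-!
Record each point `x` by its signature `f ↦ f x` on the realiser `L`, a partial map from `L` to
the `t`-chain defined on exactly `mult L x` members. Two distinct points are separated by some
`f ∈ L` on which both are defined with different values, so the sets of total maps `L → Fin t`
extending their signatures are disjoint. The signature of `x` has `t ^ (|L| - mult L x)`
extensions, so `n * t ^ (|L| - d) ≤ t ^ |L|` when every multiplicity is at most `d`, that is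
`n ≤ t ^ d`. The set of all monotone partial maps is a realiser once `t ≥ 2`, so `ltdim` is
attained.
-/

open Classical Finset Real
open scoped Classical

noncomputable section

/-- A monotone partial function from `P` to the `t`-element chain,
encoded as a function into `Option (Fin t)` (`none` = outside the domain). -/
def MonotonePartial {P : Type*} [PartialOrder P] {t : ℕ} (f : P → Option (Fin t)) : Prop :=
  ∀ ⦃x y : P⦄, x ≤ y → ∀ ⦃a b : Fin t⦄, f x = some a → f y = some b → a ≤ b

/-- `f` separates the pair `(x, y)`: both are in the domain and `f x < f y`. -/
def Separates {P : Type*} {t : ℕ} (f : P → Option (Fin t)) (x y : P) : Prop :=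
  ∃ a b : Fin t, f x = some a ∧ f y = some b ∧ a < b

/-- A local `t`-realiser: a set of monotone partial functions into the `t`-chain
separating every pair `x ≱ y`. -/
def IsLocalRealiser {P : Type*} [PartialOrder P] {t : ℕ}
    (L : Finset (P → Option (Fin t))) : Prop :=
  (∀ f ∈ L, MonotonePartial f) ∧ ∀ x y : P, ¬ y ≤ x → ∃ f ∈ L, Separates f x y

/-- The multiplicity of `x` in `L`: the number of members of `L` whose domain contains `x`. -/
def mult {P : Type*} {t : ℕ} (L : Finset (P → Option (Fin t))) (x : P) : ℕ :=
  (L.filter fun f => (f x).isSome).card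

/-- The local `t`-dimension: minimal possible maximum multiplicity of a local `t`-realiser. -/
def ltdim (t : ℕ) (P : Type*) [PartialOrder P] : ℕ :=
  sInf {d | ∃ L : Finset (P → Option (Fin t)), IsLocalRealiser L ∧ ∀ x, mult L x ≤ d}

section Completions

variable {ι α : Type*} [Fintype ι] [Fintype α]

def completions (p : ι → Option α) : Finset (ι → α) :=
  {φ | ∀ i, ∀ a ∈ p i, φ i = a}

theorem card_completions (p : ι → Option α) :
    #(completions p) = Fintype.card α ^ #{i | p i = none} := by
  have hfactor (o : Option α) :
      Fintype.card {b : α // ∀ a ∈ o, b = a} = if o = none then Fintype.card α else 1 := by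
    cases o <;> simp
  rw [completions, ← Fintype.card_subtype,
    Fintype.card_congr (Equiv.subtypePiEquivPi (p := fun i b => ∀ a ∈ p i, b = a)),
    Fintype.card_pi]
  simp only [hfactor]
  rw [← prod_filter, prod_const]

theorem disjoint_completions {p q : ι → Option α} {i : ι} {a b : α} (hp : p i = some a)
    (hq : q i = some b) (hab : a ≠ b) : Disjoint (completions p) (completions q) := by
  rw [disjoint_left]
  intro φ hφp hφq
  simp only [completions, mem_filter, mem_univ, true_and] at hφp hφq
  exact hab ((hφp i a hp).symm.trans (hφq i b hq))

theorem sum_pow_card_eq_none_le {X : Type*} [Fintype X] (s : X → ι → Option α)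
    (hs : Pairwise fun x y => ∃ i a b, s x i = some a ∧ s y i = some b ∧ a ≠ b) :
    ∑ x, Fintype.card α ^ #{i | s x i = none} ≤ Fintype.card α ^ Fintype.card ι := by
  calc ∑ x, Fintype.card α ^ #{i | s x i = none}
      = #(univ.biUnion fun x => completions (s x)) := by
        rw [card_biUnion]
        · simp only [card_completions]
        · intro x _ y _ hxy
          obtain ⟨i, a, b, hx, hy, hab⟩ := hs hxy
          exact disjoint_completions hx hy hab
    _ ≤ Fintype.card (ι → α) := card_le_univ _
    _ = Fintype.card α ^ Fintype.card ι := Fintype.card_fun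

end Completions

theorem IsLocalRealiser.exists_ne_of_ne {P : Type*} [PartialOrder P] {t : ℕ}
    {L : Finset (P → Option (Fin t))} (hL : IsLocalRealiser L) {x y : P} (hxy : x ≠ y) :
    ∃ f ∈ L, ∃ a b, f x = some a ∧ f y = some b ∧ a ≠ b := by
  by_cases hyx : y ≤ x
  · obtain ⟨f, hf, a, b, hy, hx, hab⟩ := hL.2 y x fun hxy' => hxy (le_antisymm hxy' hyx)
    exact ⟨f, hf, b, a, hx, hy, hab.ne'⟩
  · obtain ⟨f, hf, a, b, hx, hy, hab⟩ := hL.2 x y hyx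
    exact ⟨f, hf, a, b, hx, hy, hab.ne⟩

theorem card_filter_eq_none_add_mult {P : Type*} {t : ℕ} (L : Finset (P → Option (Fin t)))
    (x : P) : #{f : L | f.1 x = none} + mult L x = #L := by
  rw [card_filter, univ_eq_attach, sum_attach L fun f => if f x = none then 1 else 0,
    ← card_filter, add_comm, mult]
  simpa only [Option.not_isSome_iff_eq_none] using
    card_filter_add_card_filter_not (s := L) fun f => (f x).isSome

theorem IsLocalRealiser.card_le_pow {P : Type*} [PartialOrder P] [Fintype P] {t : ℕ}
    (ht : 0 < t) {L : Finset (P → Option (Fin t))} (hL : IsLocalRealiser L) {d : ℕ}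
    (hd : ∀ x, mult L x ≤ d) : Fintype.card P ≤ t ^ d := by
  have hkraft := sum_pow_card_eq_none_le (fun x (f : L) => f.1 x) fun x y hxy => by
    obtain ⟨f, hf, a, b, hab⟩ := hL.exists_ne_of_ne hxy
    exact ⟨⟨f, hf⟩, a, b, hab⟩
  simp only [Fintype.card_fin, Fintype.card_coe] at hkraft
  have hterm (x : P) : t ^ (#L - d) ≤ t ^ #{f : L | f.1 x = none} :=
    Nat.pow_le_pow_right ht (by have := card_filter_eq_none_add_mult L x; have := hd x; omega)
  have hmul : Fintype.card P * t ^ (#L - d) ≤ t ^ d * t ^ (#L - d) := calc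
    Fintype.card P * t ^ (#L - d) = ∑ _x : P, t ^ (#L - d) := by
      rw [sum_const, card_univ, smul_eq_mul]
    _ ≤ ∑ x : P, t ^ #{f : L | f.1 x = none} := sum_le_sum fun x _ => hterm x
    _ ≤ t ^ #L := hkraft
    _ ≤ t ^ d * t ^ (#L - d) := by rw [← pow_add]; exact Nat.pow_le_pow_right ht (by omega)
  exact Nat.le_of_mul_le_mul_right hmul (pow_pos ht _)

def twoPointMap {P α : Type*} [DecidableEq P] (x y : P) (a b : α) : P → Option α :=
  fun z => if z = x then some a else if z = y then some b else none

theorem monotonePartial_twoPointMap {P : Type*} [PartialOrder P] [DecidableEq P] {t : ℕ}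
    {x y : P} (hyx : ¬ y ≤ x) {a b : Fin t} (hab : a ≤ b) :
    MonotonePartial (twoPointMap x y a b) := by
  intro u v huv c e hu hv
  unfold twoPointMap at hu hv
  split_ifs at hu hv <;> grind

theorem separates_twoPointMap {P : Type*} [DecidableEq P] {t : ℕ} {x y : P} (hxy : x ≠ y)
    {a b : Fin t} (hab : a < b) : Separates (twoPointMap x y a b) x y :=
  ⟨a, b, by simp [twoPointMap], by simp [twoPointMap, hxy.symm], hab⟩

theorem isLocalRealiser_filter_monotonePartial (P : Type*) [PartialOrder P] [Fintype P] {t : ℕ}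
    (ht : 2 ≤ t) : IsLocalRealiser ({f | MonotonePartial f} : Finset (P → Option (Fin t))) := by
  refine ⟨fun f hf => (mem_filter.1 hf).2, fun x y hyx => ?_⟩
  have hxy : x ≠ y := fun h => hyx (h ▸ le_rfl)
  have h01 : (⟨0, by omega⟩ : Fin t) < ⟨1, by omega⟩ := Fin.mk_lt_mk.2 one_pos
  exact ⟨_, mem_filter.2 ⟨mem_univ _, monotonePartial_twoPointMap hyx h01.le⟩,
    separates_twoPointMap hxy h01⟩

theorem exists_isLocalRealiser_mult_le_ltdim (P : Type*) [PartialOrder P] [Fintype P] {t : ℕ}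
    (ht : 2 ≤ t) :
    ∃ L : Finset (P → Option (Fin t)), IsLocalRealiser L ∧ ∀ x, mult L x ≤ ltdim t P := by
  have hne :
      {d | ∃ L : Finset (P → Option (Fin t)), IsLocalRealiser L ∧ ∀ x, mult L x ≤ d}.Nonempty :=
    ⟨_, _, isLocalRealiser_filter_monotonePartial P ht, fun _ => card_filter_le _ _⟩
  exact Nat.sInf_mem hne

theorem Real.logb_natCast_le_of_le_pow {b n d : ℕ} (hb : 1 < b) (hn : 0 < n) (h : n ≤ b ^ d) :
    logb b n ≤ d := by
  rw [logb_le_iff_le_rpow (by exact_mod_cast hb) (by exact_mod_cast hn), rpow_natCast]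
  exact_mod_cast h

/-- every local `t`-realiser of a finite poset `P` with `n` elements has
maximum multiplicity at least `log_t n`; hence `ltdim t P ≥ log_t n`. -/
theorem ltdim_ge_logb (P : Type*) [PartialOrder P] [Fintype P] [Nonempty P]
    (t : ℕ) (ht : 2 ≤ t) :
    (∀ L : Finset (P → Option (Fin t)), IsLocalRealiser L →
      ∃ x : P, Real.logb t (Fintype.card P) ≤ (mult L x : ℝ)) ∧
    Real.logb t (Fintype.card P) ≤ (ltdim t P : ℝ) := by
  have h_realiser (L : Finset (P → Option (Fin t))) (hL : IsLocalRealiser L) :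
      ∃ x : P, Real.logb t (Fintype.card P) ≤ (mult L x : ℝ) := by
    obtain ⟨x, hx⟩ := Finite.exists_max (mult L)
    exact ⟨x, Real.logb_natCast_le_of_le_pow (by omega) Fintype.card_pos
      (hL.card_le_pow (by omega) hx)⟩
  refine ⟨h_realiser, ?_⟩
  obtain ⟨L, hL, hLd⟩ := exists_isLocalRealiser_mult_le_ltdim P ht
  obtain ⟨x, hx⟩ := h_realiser L hL
  exact hx.trans (by exact_mod_cast hLd x)
end
end

section
/- Let L be a set of monotone partial functions from a finite poset P (with |P| = n) to the t-element chain such that every pair of distinct points of P is in the domain of some f in L that separates them (assigns them distinct values). Then the average multiplicity (1/n)·Σ_{x∈P} μ_L(x) is at least log_t(n). -/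
open Classical Finset Real
open scoped Classical

noncomputable section

/-!
Give every `f ∈ L` an independent uniformly random value in `Fin t`. The event that these values
agree with `f x` for every `f` defined at `x` has probability `t ^ (-μ x)`, and the events for
distinct points are disjoint because some `f` separates them; hence `∑ₓ t ^ (-μ x) ≤ 1`.
Jensen's inequality for `exp` turns this into `t ^ (-average μ) ≤ 1 / n`.
-/

namespace Real

theorem logb_card_le_sum_div_card_of_sum_rpow_neg_le_one {ι : Type*} [Fintype ι] [Nonempty ι]
    {b : ℝ} (hb : 1 < b) (m : ι → ℝ) (h : ∑ i, b ^ (-m i) ≤ 1) :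
    logb b (Fintype.card ι) ≤ (∑ i, m i) / Fintype.card ι := by
  set n : ℝ := (Fintype.card ι : ℝ)
  have hn : 0 < n := by positivity
  have hb0 : 0 < b := by linarith
  have jensen := convexOn_exp.map_sum_le (t := univ) (w := fun _ => 1 / n)
    (p := fun i => log b * -m i) (fun _ _ => by positivity)
    (by simp [n, hn.ne']) (fun _ _ => Set.mem_univ _)
  simp only [smul_eq_mul, ← mul_sum, ← rpow_def_of_pos hb0] at jensen
  have hexp : b ^ (-((∑ i, m i) / n)) ≤ n⁻¹ := by
    calc b ^ (-((∑ i, m i) / n)) = exp (1 / n * (log b * ∑ i, -m i)) := by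
          rw [rpow_def_of_pos hb0, sum_neg_distrib]; ring_nf
      _ ≤ 1 / n * ∑ i, b ^ (-m i) := jensen
      _ ≤ n⁻¹ := by rw [one_div]; exact mul_le_of_le_one_right (by positivity) h
  have := logb_le_logb_of_le hb (by positivity) hexp
  rw [logb_rpow hb0 hb.ne', logb_inv] at this
  linarith

end Real

section Kraft

variable {P : Type*} {t : ℕ}

def extensions (L : Finset (P → Option (Fin t))) (x : P) : Finset (L → Fin t) :=
  Fintype.piFinset fun f => (f.1 x).elim univ singleton

theorem mem_extensions {L : Finset (P → Option (Fin t))} {x : P} {g : L → Fin t} :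
    g ∈ extensions L x ↔ ∀ f : L, ∀ v, f.1 x = some v → g f = v := by
  simp only [extensions, Fintype.mem_piFinset]
  refine forall_congr' fun f => ?_
  cases f.1 x <;> simp

theorem card_extensions_mul_pow_mult (L : Finset (P → Option (Fin t))) (x : P) :
    #(extensions L x) * t ^ mult L x = t ^ #L := by
  have hcard : ∀ f : L, #((f.1 x).elim univ singleton) = if (f.1 x).isSome then 1 else t := by
    intro f; cases f.1 x <;> simp
  rw [extensions, Fintype.card_piFinset, univ_eq_attach]
  simp only [hcard]
  rw [prod_attach L fun f => if (f x).isSome then 1 else t, prod_ite, prod_const_one,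
    prod_const, one_mul, mult, ← pow_add, add_comm, card_filter_add_card_filter_not]

theorem disjoint_extensions {L : Finset (P → Option (Fin t))} {x y : P} {f : P → Option (Fin t)}
    (hf : f ∈ L) {a b : Fin t} (ha : f x = some a) (hb : f y = some b) (hab : a ≠ b) :
    Disjoint (extensions L x) (extensions L y) :=
  disjoint_left.2 fun _ hx hy =>
    hab <| (mem_extensions.1 hx ⟨f, hf⟩ a ha).symm.trans (mem_extensions.1 hy ⟨f, hf⟩ b hb)

theorem sum_inv_pow_mult_le_one [Fintype P] (ht : 0 < t) (L : Finset (P → Option (Fin t)))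
    (hsep : ∀ x y : P, x ≠ y → ∃ f ∈ L, ∃ a b : Fin t, f x = some a ∧ f y = some b ∧ a ≠ b) :
    ∑ x, ((t : ℝ) ^ mult L x)⁻¹ ≤ 1 := by
  have hdisj : ((univ : Finset P) : Set P).PairwiseDisjoint (extensions L) := by
    intro x _ y _ hxy
    obtain ⟨f, hf, a, b, ha, hb, hab⟩ := hsep x y hxy
    exact disjoint_extensions hf ha hb hab
  have hcount : ∑ x, #(extensions L x) ≤ t ^ #L := by
    rw [← card_biUnion hdisj]
    simpa using card_le_univ (univ.biUnion (extensions L))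
  have hpow : ∀ x, ((t : ℝ) ^ mult L x)⁻¹ = #(extensions L x) / (t : ℝ) ^ #L := by
    intro x
    have h := congrArg (Nat.cast : ℕ → ℝ) (card_extensions_mul_pow_mult L x)
    push_cast at h
    have hc : (#(extensions L x) : ℝ) ≠ 0 := left_ne_zero_of_mul (h.trans_ne (by positivity))
    rw [← h, div_mul_cancel_left₀ hc]
  rw [sum_congr rfl fun x _ => hpow x, ← sum_div, div_le_one (by positivity)]
  exact_mod_cast hcount

end Kraft

theorem average_mult_ge_logb_general (P : Type*) [Fintype P] [Nonempty P]
    (t : ℕ) (ht : 2 ≤ t) (L : Finset (P → Option (Fin t)))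
    (hsep : ∀ x y : P, x ≠ y → ∃ f ∈ L, ∃ a b : Fin t,
      f x = some a ∧ f y = some b ∧ a ≠ b) :
    Real.logb t (Fintype.card P) ≤ (∑ x : P, (mult L x : ℝ)) / (Fintype.card P) := by
  have hkraft := sum_inv_pow_mult_le_one (by omega) L hsep
  refine logb_card_le_sum_div_card_of_sum_rpow_neg_le_one (by exact_mod_cast ht) _ ?_
  simpa only [rpow_neg (Nat.cast_nonneg t), rpow_natCast] using hkraft

/-- if a set of monotone partial functions into the `t`-chain assigns
distinct values to every pair of distinct points (each such pair being in a common
domain), then the average multiplicity is at least `log_t n`. -/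
theorem average_mult_ge_logb (P : Type*) [PartialOrder P] [Fintype P] [Nonempty P]
    (t : ℕ) (ht : 2 ≤ t) (L : Finset (P → Option (Fin t)))
    (hmono : ∀ f ∈ L, MonotonePartial f)
    (hsep : ∀ x y : P, x ≠ y → ∃ f ∈ L, ∃ a b : Fin t,
      f x = some a ∧ f y = some b ∧ a ≠ b) :
    Real.logb t (Fintype.card P) ≤ (∑ x : P, (mult L x : ℝ)) / (Fintype.card P) :=
  average_mult_ge_logb_general P t ht L hsep
end
end

section
/- Let L be a family of complete t-partite graphs with vertex sets contained in [n] whose edge sets together cover all edges of the complete graph K_n. Then Σ_{x∈[n]} t^{-μ(x)} ≤ 1, where μ(x) is the number of graphs in L whose vertex set contains x. -/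
open Classical Finset Real
open scoped Classical

noncomputable section

/-!
Hansel-type counting: choose one colour for every member of `L`. The choices agreeing with
every colouring whose domain contains `x` form a `t ^ (-μ(x))` fraction of all choices, and
the covering hypothesis makes these sets pairwise disjoint for distinct `x`.
-/

section Hansel

open Function

variable {V : Type*} [Fintype V] {t : ℕ}

def compatibleChoices (L : Finset (V → Option (Fin t))) (x : V) : Finset (L → Fin t) :=
  Fintype.piFinset fun c => (c.1 x).elim univ singleton

lemma mem_compatibleChoices {L : Finset (V → Option (Fin t))} {x : V} {σ : L → Fin t} :
    σ ∈ compatibleChoices L x ↔ ∀ c : L, ∀ a, c.1 x = some a → σ c = a := by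
  simp only [compatibleChoices, Fintype.mem_piFinset]
  refine forall_congr' fun c => ?_
  cases c.1 x <;> simp

lemma card_compatibleChoices_mul_pow_mult (L : Finset (V → Option (Fin t))) (x : V) :
    #(compatibleChoices L x) * t ^ mult L x = t ^ #L := by
  have hchoices : #(compatibleChoices L x) = ∏ c ∈ L, if (c x).isSome then 1 else t := by
    rw [compatibleChoices, Fintype.card_piFinset,
      prod_coe_sort L fun c => #((c x).elim univ singleton)]
    refine prod_congr rfl fun c _ => ?_
    cases c x <;> simp
  have hpow : t ^ mult L x = ∏ c ∈ L, if (c x).isSome then t else 1 := by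
    rw [← prod_filter, prod_const, mult]
  rw [hchoices, hpow, ← prod_mul_distrib, ← prod_const]
  exact prod_congr rfl fun c _ => by split <;> simp

lemma pairwise_disjoint_compatibleChoices {L : Finset (V → Option (Fin t))}
    (hcov : ∀ x y : V, x ≠ y → ∃ c ∈ L, ∃ a b : Fin t, c x = some a ∧ c y = some b ∧ a ≠ b) :
    Pairwise (Disjoint on (compatibleChoices L)) := by
  intro x y hxy
  obtain ⟨c, hc, a, b, hca, hcb, hab⟩ := hcov x y hxy
  refine disjoint_left.mpr fun σ hσx hσy => hab ?_
  rw [← mem_compatibleChoices.mp hσx ⟨c, hc⟩ a hca, mem_compatibleChoices.mp hσy ⟨c, hc⟩ b hcb]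

theorem sum_zpow_neg_mult_le_one (L : Finset (V → Option (Fin t))) (ht : 0 < t)
    (hcov : ∀ x y : V, x ≠ y → ∃ c ∈ L, ∃ a b : Fin t, c x = some a ∧ c y = some b ∧ a ≠ b) :
    ∑ x, (t : ℝ) ^ (-(mult L x : ℤ)) ≤ 1 := by
  have htL : (0 : ℝ) < t ^ #L := by positivity
  have hterm : ∀ x, (t : ℝ) ^ (-(mult L x : ℤ)) = #(compatibleChoices L x) / t ^ #L := by
    intro x
    have hcard : (#(compatibleChoices L x) : ℝ) * t ^ mult L x = t ^ #L := by
      exact_mod_cast card_compatibleChoices_mul_pow_mult L x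
    rw [zpow_neg, zpow_natCast, eq_div_iff htL.ne', ← hcard]
    field_simp
  have hcount : ∑ x, #(compatibleChoices L x) ≤ t ^ #L := by
    rw [← card_biUnion ((pairwise_disjoint_compatibleChoices hcov).set_pairwise _)]
    simpa using card_le_univ (univ.biUnion (compatibleChoices L))
  simp_rw [hterm, ← sum_div]
  rw [div_le_one htL]
  exact_mod_cast hcount

end Hansel

/-- Each complete `t`-partite graph is encoded by a partial `t`-colouring
`c : Fin n → Option (Fin t)`: its vertex set is the domain of `c`, its edges are the pairs
of the domain with distinct colours. -/
theorem hansel_tpartite (n t : ℕ) (ht : 2 ≤ t) (L : Finset (Fin n → Option (Fin t)))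
    (hcov : ∀ x y : Fin n, x ≠ y → ∃ c ∈ L, ∃ a b : Fin t,
      c x = some a ∧ c y = some b ∧ a ≠ b) :
    ∑ x : Fin n, (t : ℝ) ^ (-(mult L x : ℤ)) ≤ 1 :=
  sum_zpow_neg_mult_le_one L (by omega) hcov
end
end

section
/- For all integers n ≥ 1 and t ≥ 2, the local t-dimension of the tn-element chain is at most the local t-dimension of the n-element chain plus 1. -/
open Classical Finset Real
open scoped Classical

noncomputable section

/-- Partial function defined only on `{x, y}`, sending `x ↦ 0`, `y ↦ 1`. -/
def pairFn (m t : ℕ) (ht : 2 ≤ t) (x y : Fin m) : Fin m → Option (Fin t) :=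
  fun z => if z = x then some ⟨0, by omega⟩ else if z = y then some ⟨1, by omega⟩ else none

lemma realiser_nonempty (m t : ℕ) (ht : 2 ≤ t) :
    {d | ∃ L : Finset (Fin m → Option (Fin t)), IsLocalRealiser L ∧ ∀ x, mult L x ≤ d}.Nonempty := by
  classical
  set L : Finset (Fin m → Option (Fin t)) :=
    ((Finset.univ : Finset (Fin m × Fin m)).filter fun p => p.1 < p.2).image
      fun p => pairFn m t ht p.1 p.2 with hLdef
  refine ⟨L.card, L, ⟨?_, ?_⟩, fun x => Finset.card_filter_le _ _⟩
  · intro f hf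
    simp only [hLdef, Finset.mem_image, Finset.mem_filter] at hf
    obtain ⟨⟨x, y⟩, ⟨-, hxy⟩, rfl⟩ := hf
    intro u v huv a b ha hb
    unfold pairFn at ha hb
    by_cases h1 : u = x
    · rw [if_pos h1] at ha
      obtain rfl := Option.some_inj.mp ha
      simp [Fin.le_def]
    · by_cases h2 : u = y
      · rw [if_neg h1, if_pos h2] at ha
        obtain rfl := Option.some_inj.mp ha
        by_cases h3 : v = x
        · have hyx : y ≤ x := by rw [← h2, ← h3]; exact huv
          exact absurd (hxy.trans_le hyx) (lt_irrefl _)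
        · by_cases h4 : v = y
          · rw [if_neg h3, if_pos h4] at hb
            obtain rfl := Option.some_inj.mp hb
            exact le_refl _
          · rw [if_neg h3, if_neg h4] at hb
            exact absurd hb (by simp)
      · rw [if_neg h1, if_neg h2] at ha
        exact absurd ha (by simp)
  · intro x y hxy
    have hlt : x < y := lt_of_not_ge hxy
    refine ⟨pairFn m t ht x y, ?_, ⟨0, by omega⟩, ⟨1, by omega⟩, ?_, ?_, ?_⟩
    · simp only [hLdef, Finset.mem_image, Finset.mem_filter]
      exact ⟨(x, y), ⟨Finset.mem_univ _, hlt⟩, rfl⟩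
    · simp [pairFn]
    · simp [pairFn, hlt.ne']
    · exact Fin.mk_lt_mk.mpr one_pos

/-- `ltdim_t` of the `tn`-element chain is at most that of the
`n`-element chain plus one. -/
theorem ltdim_chain_mul (n t : ℕ) (hn : 1 ≤ n) (ht : 2 ≤ t) :
    ltdim t (Fin (t * n)) ≤ ltdim t (Fin n) + 1 := by
  classical
  have hn0 : 0 < n := hn
  obtain ⟨L, hL, hmult⟩ := Nat.sInf_mem (realiser_nonempty n t ht)
  set d := ltdim t (Fin n) with hd
  -- the block function
  have hdivlt : ∀ x : Fin (t * n), x.val / n < t := fun x =>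
    (Nat.div_lt_iff_lt_mul hn0).2 x.isLt
  set g : Fin (t * n) → Option (Fin t) := fun x => some ⟨x.val / n, hdivlt x⟩ with hgdef
  -- block copies
  set cp : (Fin n → Option (Fin t)) × Fin t → (Fin (t * n) → Option (Fin t)) :=
    fun p x => if x.val / n = p.2.val then p.1 ⟨x.val % n, Nat.mod_lt _ hn0⟩ else none with hcpdef
  set L' : Finset (Fin (t * n) → Option (Fin t)) :=
    (L ×ˢ Finset.univ).image cp ∪ {g} with hL'def
  have hreal : IsLocalRealiser L' := by
    constructor
    · intro f hf
      simp only [hL'def, Finset.mem_union, Finset.mem_image, Finset.mem_singleton] at hf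
      rcases hf with ⟨⟨f₀, i⟩, hf₀, rfl⟩ | rfl
      · -- copies are monotone partial
        intro u v huv a b ha hb
        simp only [hcpdef] at ha hb
        split_ifs at ha hb with h1 h2
        have hmod : (⟨u.val % n, Nat.mod_lt _ hn0⟩ : Fin n) ≤ ⟨v.val % n, Nat.mod_lt _ hn0⟩ := by
          have h5 : u.val / n = v.val / n := by rw [h1, h2]
          have h3 := Nat.div_add_mod u.val n
          have h4 := Nat.div_add_mod v.val n
          rw [h5] at h3
          have : u.val ≤ v.val := huv
          simp only [Fin.mk_le_mk]
          omega
        exact hL.1 f₀ (Finset.mem_product.1 hf₀).1 hmod ha hb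
      · -- g is monotone
        intro u v huv a b ha hb
        simp only [hgdef, Option.some.injEq] at ha hb
        subst ha; subst hb
        simp only [Fin.mk_le_mk]
        exact Nat.div_le_div_right huv
    · intro x y hxy
      have hlt : x < y := lt_of_not_ge hxy
      have hlev : x.val / n ≤ y.val / n := Nat.div_le_div_right hlt.le
      rcases eq_or_lt_of_le hlev with heq | hneq
      · -- same block: use the copy realiser
        have hmodlt : x.val % n < y.val % n := by
          have h3 := Nat.div_add_mod x.val n
          have h4 := Nat.div_add_mod y.val n
          rw [heq] at h3
          have : x.val < y.val := hlt
          omega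
        obtain ⟨f₀, hf₀, a, b, hfa, hfb, hab⟩ :=
          hL.2 ⟨x.val % n, Nat.mod_lt _ hn0⟩ ⟨y.val % n, Nat.mod_lt _ hn0⟩
            (by simp [Fin.le_def]; omega)
        refine ⟨cp (f₀, ⟨x.val / n, hdivlt x⟩), ?_, a, b, ?_, ?_, hab⟩
        · simp only [hL'def, Finset.mem_union, Finset.mem_image]
          exact Or.inl ⟨(f₀, ⟨x.val / n, hdivlt x⟩),
            Finset.mem_product.2 ⟨hf₀, Finset.mem_univ _⟩, rfl⟩
        · simp [hcpdef, hfa]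
        · simp [hcpdef, ← heq, hfb]
      · -- different blocks: use g
        refine ⟨g, by simp [hL'def], ⟨x.val / n, hdivlt x⟩, ⟨y.val / n, hdivlt y⟩, rfl, rfl, ?_⟩
        simpa [Fin.lt_def] using hneq
  have hbound : ∀ z, mult L' z ≤ d + 1 := by
    intro z
    have h1 : mult L' z ≤ mult ((L ×ˢ Finset.univ).image cp) z + mult {g} z := by
      unfold mult
      rw [hL'def, Finset.filter_union]
      exact Finset.card_union_le _ _
    have h2 : mult ({g} : Finset (Fin (t*n) → Option (Fin t))) z ≤ 1 := by
      unfold mult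
      exact (Finset.card_filter_le _ _).trans (by simp)
    have h3 : mult ((L ×ˢ Finset.univ).image cp) z ≤ d := by
      unfold mult
      rw [Finset.filter_image]
      refine (Finset.card_image_le).trans ?_
      have hsub : ((L ×ˢ Finset.univ).filter fun p => ((cp p) z).isSome) ⊆
          (L.filter fun f => (f (⟨z.val % n, Nat.mod_lt _ hn0⟩ : Fin n)).isSome) ×ˢ
            ({⟨z.val / n, hdivlt z⟩} : Finset (Fin t)) := by
        intro p hp
        simp only [Finset.mem_filter, Finset.mem_product, Finset.mem_singleton] at hp ⊢
        obtain ⟨⟨hpL, -⟩, hps⟩ := hp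
        simp only [hcpdef] at hps
        split_ifs at hps with h
        · exact ⟨⟨hpL, hps⟩, by ext; simp [← h]⟩
        · simp at hps
      refine (Finset.card_le_card hsub).trans ?_
      rw [Finset.card_product, Finset.card_singleton, mul_one]
      exact hmult _
    omega
  have : ltdim t (Fin (t * n)) ≤ d + 1 := Nat.sInf_le ⟨L', hreal, hbound⟩
  exact this

end
end

section
/- For every finite poset P with n elements, every pair of integers t ≥ s ≥ 2: the local t-dimension of P is at most ⌈log_t n⌉ times the local dimension of P, and the local t-dimension of P is at most ⌈log_t s⌉ times the local s-dimension of P. -/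
open Classical Finset Real
open scoped Classical

noncomputable section

/-- Local dimension: like local `t`-dimension but with partial functions into an
arbitrary chain; for finite posets the chain may be taken to be `ℕ`. -/
def MonotonePartialNat {P : Type*} [PartialOrder P] (f : P → Option ℕ) : Prop :=
  ∀ ⦃x y : P⦄, x ≤ y → ∀ ⦃a b : ℕ⦄, f x = some a → f y = some b → a ≤ b

def ldim (P : Type*) [PartialOrder P] : ℕ :=
  sInf {d | ∃ L : Finset (P → Option ℕ),
    ((∀ f ∈ L, MonotonePartialNat f) ∧
      ∀ x y : P, ¬ y ≤ x → ∃ f ∈ L, ∃ a b : ℕ, f x = some a ∧ f y = some b ∧ a < b) ∧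
    ∀ x : P, (L.filter fun f => (f x).isSome).card ≤ d}

/-!
Write the values of a monotone partial function `f` into a chain with at most `t ^ k` elements
in base `t`. If `f x < f y`, the two values first differ (from the top) at some digit `i`, where
`f x` has the smaller digit. So the partial functions "`i`-th digit of `f`, on the points where
the digits of `f` above `i` read `p`" are monotone into the `t`-chain and together separate every
pair that `f` separates, while a point of the domain of `f` lies in the domain of exactly one of
them for each of the `k` positions. A realiser into any chain can be compressed to values below
`n = |P|` (rank each value among the values of its function), and a realiser into the `s`-chain
has values below `s`: take `k = ⌈log_t n⌉`, resp. `k = ⌈log_t s⌉`.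
-/

section

variable {P : Type*} [PartialOrder P]

def IsChainRealiser {α : Type*} [Preorder α] (L : Finset (P → Option α)) : Prop :=
  (∀ f ∈ L, ∀ ⦃x y : P⦄, x ≤ y → ∀ ⦃a b : α⦄, f x = some a → f y = some b → a ≤ b) ∧
    ∀ x y : P, ¬ y ≤ x → ∃ f ∈ L, ∃ a b : α, f x = some a ∧ f y = some b ∧ a < b

variable (P) in
def chainDim (α : Type*) [Preorder α] : ℕ :=
  sInf {d | ∃ L : Finset (P → Option α), IsChainRealiser L ∧
    ∀ x, #(L.filter fun f => (f x).isSome) ≤ d}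

variable (P) in
theorem ltdim_eq_chainDim (t : ℕ) : ltdim t P = chainDim P (Fin t) := rfl

variable (P) in
theorem ldim_eq_chainDim : ldim P = chainDim P ℕ := rfl

theorem chainDim_le {α : Type*} [Preorder α] {L : Finset (P → Option α)} {d : ℕ}
    (hL : IsChainRealiser L) (hd : ∀ x, #(L.filter fun f => (f x).isSome) ≤ d) :
    chainDim P α ≤ d :=
  Nat.sInf_le ⟨L, hL, hd⟩

theorem exists_isChainRealiser_card_filter_le_chainDim {α : Type*} [Preorder α]
    (h : ∃ L : Finset (P → Option α), IsChainRealiser L) :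
    ∃ L : Finset (P → Option α), IsChainRealiser L ∧
      ∀ x, #(L.filter fun f => (f x).isSome) ≤ chainDim P α := by
  obtain ⟨L, hL⟩ := h
  exact Nat.sInf_mem (s := {d | ∃ L : Finset (P → Option α), IsChainRealiser L ∧
    ∀ x, #(L.filter fun f => (f x).isSome) ≤ d}) ⟨#L, L, hL, fun x => card_filter_le _ _⟩

theorem exists_isChainRealiser [Fintype P] {α : Type*} [Preorder α] {a b : α} (hab : a < b) :
    ∃ L : Finset (P → Option α), IsChainRealiser L := by
  let pairFun (xy : P × P) (z : P) : Option α :=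
    if z = xy.1 then some a else if z = xy.2 then some b else none
  have pairFun_eq_some {x y z : P} {c : α} (h : pairFun (x, y) z = some c) :
      z = x ∧ c = a ∨ z = y ∧ c = b := by
    simp only [pairFun] at h
    split_ifs at h <;> simp_all
  refine ⟨(univ.filter fun xy : P × P => ¬ xy.2 ≤ xy.1).image pairFun, ?_, ?_⟩
  · simp only [mem_image, mem_filter, mem_univ, true_and]
    rintro _ ⟨⟨x, y⟩, hxy, rfl⟩ u v huv c d hu hv
    rcases pairFun_eq_some hu with ⟨rfl, rfl⟩ | ⟨rfl, rfl⟩ <;>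
      rcases pairFun_eq_some hv with ⟨rfl, rfl⟩ | ⟨rfl, rfl⟩
    exacts [le_rfl, hab.le, absurd huv hxy, le_rfl]
  · intro x y hxy
    have hne : y ≠ x := fun h => hxy h.le
    exact ⟨pairFun (x, y), mem_image_of_mem _ (by simpa using hxy), a, b,
      by simp [pairFun], by simp [pairFun, hne], hab⟩

end

theorem card_filter_isSome_image_le {P α β : Type*} [DecidableEq (P → Option β)]
    (L : Finset (P → Option α)) (φ : (P → Option α) → P → Option β) (x : P)
    (hφ : ∀ f ∈ L, (φ f x).isSome → (f x).isSome) :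
    #((L.image φ).filter fun g => (g x).isSome) ≤ #(L.filter fun f => (f x).isSome) := by
  rw [filter_image]
  refine card_image_le.trans (card_le_card fun f hf => ?_)
  rw [mem_filter] at hf ⊢
  exact ⟨hf.1, hφ f hf.1 hf.2⟩

theorem IsChainRealiser.image_map {P α β : Type*} [PartialOrder P] [LinearOrder α] [Preorder β]
    [DecidableEq (P → Option β)] {L : Finset (P → Option α)} (hL : IsChainRealiser L)
    (g : (P → Option α) → α → β)
    (hg : ∀ f ∈ L, StrictMonoOn (g f) {a | ∃ x, f x = some a}) :
    IsChainRealiser (L.image fun f x => (f x).map (g f)) := by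
  constructor
  · simp only [mem_image]
    rintro _ ⟨f, hf, rfl⟩ x y hxy _ _ hx hy
    simp only [Option.map_eq_some_iff] at hx hy
    obtain ⟨a, ha, rfl⟩ := hx
    obtain ⟨b, hb, rfl⟩ := hy
    exact (hg f hf).monotoneOn ⟨x, ha⟩ ⟨y, hb⟩ (hL.1 f hf hxy ha hb)
  · intro x y hxy
    obtain ⟨f, hf, a, b, ha, hb, hab⟩ := hL.2 x y hxy
    exact ⟨_, mem_image_of_mem _ hf, g f a, g f b, by simp [ha], by simp [hb],
      hg f hf ⟨x, ha⟩ ⟨y, hb⟩ hab⟩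

theorem strictMonoOn_card_filter_lt {α : Type*} [LinearOrder α] (S : Finset α) :
    StrictMonoOn (fun a => #(S.filter (· < a))) S := by
  intro a ha b _ hab
  refine card_lt_card ((ssubset_iff_of_subset fun c hc => ?_).2 ⟨a, ?_, ?_⟩)
  · rw [mem_filter] at hc ⊢
    exact ⟨hc.1, hc.2.trans hab⟩
  · exact mem_filter.2 ⟨ha, hab⟩
  · simp

theorem card_filter_lt_lt_card {α : Type*} [LinearOrder α] {S : Finset α} {a : α}
    (ha : a ∈ S) : #(S.filter (· < a)) < #S :=
  card_lt_card (filter_ssubset.2 ⟨a, ha, lt_irrefl a⟩)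

/-- Replacing every value of a partial function by its rank among the function's values keeps the
order on its domain and brings all values below `Fintype.card P`. -/
theorem IsChainRealiser.exists_lt_card {P α : Type*} [PartialOrder P] [Fintype P] [LinearOrder α]
    {L : Finset (P → Option α)} (hL : IsChainRealiser L) :
    ∃ L' : Finset (P → Option ℕ), IsChainRealiser L' ∧
      (∀ g ∈ L', ∀ x a, g x = some a → a < Fintype.card P) ∧
      ∀ x, #(L'.filter fun g => (g x).isSome) ≤ #(L.filter fun f => (f x).isSome) := by
  let values (f : P → Option α) : Finset α := (univ.image f).eraseNone
  have mem_values {f : P → Option α} {a : α} : a ∈ values f ↔ ∃ x, f x = some a := by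
    simp [values]
  let rank (f : P → Option α) (a : α) : ℕ := #((values f).filter (· < a))
  have hrank : ∀ f ∈ L, StrictMonoOn (rank f) {a | ∃ x, f x = some a} :=
    fun f _ a ha b hb hab =>
      strictMonoOn_card_filter_lt (values f) (mem_values.2 ha) (mem_values.2 hb) hab
  refine ⟨L.image fun f x => (f x).map (rank f), hL.image_map rank hrank, ?_,
    fun x => card_filter_isSome_image_le _ _ x fun f _ => by simp⟩
  simp only [mem_image]
  rintro _ ⟨f, -, rfl⟩ x _ hx
  obtain ⟨a, ha, rfl⟩ := Option.map_eq_some_iff.1 hx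
  calc rank f a < #(values f) := card_filter_lt_lt_card (mem_values.2 ⟨x, ha⟩)
    _ ≤ #(univ.image f) := card_eraseNone_le _
    _ ≤ Fintype.card P := card_image_le

theorem Nat.mod_le_mod_of_div_eq {t a b : ℕ} (hab : a ≤ b) (h : a / t = b / t) :
    a % t ≤ b % t := by
  have ha := Nat.div_add_mod a t
  have hb := Nat.div_add_mod b t
  rw [h] at ha
  omega

theorem Nat.mod_lt_mod_of_div_eq {t a b : ℕ} (hab : a < b) (h : a / t = b / t) :
    a % t < b % t := by
  have ha := Nat.div_add_mod a t
  have hb := Nat.div_add_mod b t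
  rw [h] at ha
  omega

theorem Nat.exists_digit_lt_of_lt {t k a b : ℕ} (hab : a < b) (hb : b < t ^ k) :
    ∃ i < k, a / t ^ (i + 1) = b / t ^ (i + 1) ∧ a / t ^ i % t < b / t ^ i % t := by
  induction k generalizing a b with
  | zero => simp at hb; omega
  | succ k ih =>
    by_cases hdiv : a / t = b / t
    · exact ⟨0, k.succ_pos, by simpa using hdiv,
        by simpa using Nat.mod_lt_mod_of_div_eq hab hdiv⟩
    have hlt : a / t < b / t := lt_of_le_of_ne (Nat.div_le_div_right hab.le) hdiv
    have hb' : b / t < t ^ k := Nat.div_lt_of_lt_mul (by rwa [← pow_succ'])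
    obtain ⟨i, hi, hhigh, hdigit⟩ := ih hlt hb'
    simp only [Nat.div_div_eq_div_mul, ← pow_succ'] at hhigh hdigit
    exact ⟨i + 1, by omega, hhigh, hdigit⟩

section digits

variable {P : Type*} (t : ℕ) [NeZero t]

/-- The `i`-th base-`t` digit of `f`, restricted to the points where the digits of `f` above
position `i` read `p`. -/
def digitPartial (f : P → Option ℕ) (i p : ℕ) : P → Option (Fin t) := fun x =>
  (f x).bind fun v => if v / t ^ (i + 1) = p then some (Fin.ofNat t (v / t ^ i)) else none

variable {t}

theorem digitPartial_eq_some {f : P → Option ℕ} {i p : ℕ} {x : P} {c : Fin t} :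
    digitPartial t f i p x = some c ↔
      ∃ v, f x = some v ∧ v / t ^ (i + 1) = p ∧ (c : ℕ) = v / t ^ i % t := by
  simp only [digitPartial, Option.bind_eq_some_iff, Option.ite_none_right_eq_some,
    Option.some_inj]
  refine exists_congr fun v => and_congr_right fun _ => and_congr_right fun _ => ?_
  rw [Fin.ext_iff, Fin.val_ofNat, eq_comm]

theorem digitPartial_of_eq_some {f : P → Option ℕ} {i v : ℕ} {x : P} (h : f x = some v) :
    digitPartial t f i (v / t ^ (i + 1)) x = some (Fin.ofNat t (v / t ^ i)) := by
  simp [digitPartial, h]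

variable (t) in
def digitExpansion (k : ℕ) (L : Finset (P → Option ℕ)) : Finset (P → Option (Fin t)) :=
  ((L ×ˢ range k) ×ˢ range (t ^ k)).image fun fip => digitPartial t fip.1.1 fip.1.2 fip.2

theorem isChainRealiser_digitExpansion [PartialOrder P] {k : ℕ} {L : Finset (P → Option ℕ)}
    (hL : IsChainRealiser L) (hbound : ∀ f ∈ L, ∀ x a, f x = some a → a < t ^ k) :
    IsChainRealiser (digitExpansion t k L) := by
  constructor
  · simp only [digitExpansion, mem_image]
    rintro _ ⟨⟨⟨f, i⟩, p⟩, hfip, rfl⟩ x y hxy a b hx hy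
    rw [mem_product, mem_product] at hfip
    obtain ⟨u, hu, hup, hau⟩ := digitPartial_eq_some.1 hx
    obtain ⟨w, hw, hwp, hbw⟩ := digitPartial_eq_some.1 hy
    rw [Fin.le_def, hau, hbw]
    refine Nat.mod_le_mod_of_div_eq (Nat.div_le_div_right (hL.1 f hfip.1.1 hxy hu hw)) ?_
    rw [Nat.div_div_eq_div_mul, Nat.div_div_eq_div_mul, ← pow_succ, hup, hwp]
  · intro x y hxy
    obtain ⟨f, hf, a, b, ha, hb, hab⟩ := hL.2 x y hxy
    obtain ⟨i, hi, hhigh, hdigit⟩ := Nat.exists_digit_lt_of_lt hab (hbound f hf y b hb)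
    have hp : a / t ^ (i + 1) < t ^ k := (Nat.div_le_self _ _).trans_lt (hbound f hf x a ha)
    refine ⟨digitPartial t f i (a / t ^ (i + 1)), ?_, _, _, digitPartial_of_eq_some ha,
      hhigh ▸ digitPartial_of_eq_some hb, ?_⟩
    · exact mem_image.2 ⟨((f, i), a / t ^ (i + 1)), by simp [hf, hi, hp], rfl⟩
    · simpa [Fin.lt_def] using hdigit

/-- A point of the domain of `f` lies in the domain of exactly one of the functions
`digitPartial t f i p` for each position `i`. -/
theorem card_filter_digitExpansion_le (k : ℕ) (L : Finset (P → Option ℕ)) (x : P) :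
    #((digitExpansion t k L).filter fun g => (g x).isSome) ≤
      k * #(L.filter fun f => (f x).isSome) := by
  have hsub : (digitExpansion t k L).filter (fun g => (g x).isSome) ⊆
      ((L.filter fun f => (f x).isSome) ×ˢ range k).image
        fun fi => digitPartial t fi.1 fi.2 ((fi.1 x).getD 0 / t ^ (fi.2 + 1)) := by
    simp only [subset_iff, digitExpansion, mem_filter, mem_image, mem_product, mem_range,
      Option.isSome_iff_exists]
    rintro _ ⟨⟨⟨⟨f, i⟩, p⟩, ⟨⟨hf, hi⟩, -⟩, rfl⟩, c, hc⟩
    dsimp only at hf hi hc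
    obtain ⟨v, hv, hvp, -⟩ := digitPartial_eq_some.1 hc
    exact ⟨(f, i), ⟨⟨hf, v, hv⟩, hi⟩, by simp only [hv, Option.getD_some, hvp]⟩
  calc _ ≤ #((L.filter fun f => (f x).isSome) ×ˢ range k) := (card_le_card hsub).trans card_image_le
    _ = k * #(L.filter fun f => (f x).isSome) := by rw [card_product, card_range, mul_comm]

end digits

section

variable {P : Type*} [PartialOrder P]

theorem chainDim_fin_le_mul {t k d : ℕ} [NeZero t] {L : Finset (P → Option ℕ)}
    (hL : IsChainRealiser L) (hbound : ∀ f ∈ L, ∀ x a, f x = some a → a < t ^ k)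
    (hmult : ∀ x, #(L.filter fun f => (f x).isSome) ≤ d) :
    chainDim P (Fin t) ≤ k * d :=
  chainDim_le (isChainRealiser_digitExpansion hL hbound) fun x =>
    (card_filter_digitExpansion_le k L x).trans (Nat.mul_le_mul_left k (hmult x))

theorem chainDim_fin_le_clog_card_mul [Fintype P] {α : Type*} [LinearOrder α] {t : ℕ}
    (ht : 1 < t) (hα : ∃ L : Finset (P → Option α), IsChainRealiser L) :
    chainDim P (Fin t) ≤ Nat.clog t (Fintype.card P) * chainDim P α := by
  have : NeZero t := ⟨by omega⟩
  obtain ⟨L, hL, hLdim⟩ := exists_isChainRealiser_card_filter_le_chainDim hα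
  obtain ⟨L', hL', hL'_lt, hL'_mult⟩ := hL.exists_lt_card
  exact chainDim_fin_le_mul hL'
    (fun f hf x a ha => (hL'_lt f hf x a ha).trans_le (Nat.le_pow_clog ht _))
    fun x => (hL'_mult x).trans (hLdim x)

theorem chainDim_fin_le_clog_mul [Fintype P] {s t : ℕ} (hs : 1 < s) (ht : 1 < t) :
    chainDim P (Fin t) ≤ Nat.clog t s * chainDim P (Fin s) := by
  have : NeZero t := ⟨by omega⟩
  have hsep : (⟨0, by omega⟩ : Fin s) < ⟨1, hs⟩ := Fin.mk_lt_mk.2 zero_lt_one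
  obtain ⟨L, hL, hLdim⟩ :=
    exists_isChainRealiser_card_filter_le_chainDim (exists_isChainRealiser (P := P) hsep)
  have hval := hL.image_map (fun _ => Fin.val) fun _ _ => Fin.val_strictMono.strictMonoOn _
  refine chainDim_fin_le_mul hval ?_ fun x =>
    (card_filter_isSome_image_le L _ x fun f _ => by simp).trans (hLdim x)
  simp only [mem_image]
  rintro _ ⟨f, -, rfl⟩ x _ hx
  obtain ⟨a, -, rfl⟩ := Option.map_eq_some_iff.1 hx
  exact a.isLt.trans_le (Nat.le_pow_clog ht s)

end

/-- `ltdim_t P ≤ ⌈log_t n⌉ · ldim P` and `ltdim_t P ≤ ⌈log_t s⌉ · ltdim_s P`. -/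
theorem ltdim_le_ldim (P : Type*) [PartialOrder P] [Fintype P]
    (s t : ℕ) (hs : 2 ≤ s) (hst : s ≤ t) :
    ltdim t P ≤ Nat.clog t (Fintype.card P) * ldim P ∧
    ltdim t P ≤ Nat.clog t s * ltdim s P := by
  simp only [ltdim_eq_chainDim, ldim_eq_chainDim]
  exact ⟨chainDim_fin_le_clog_card_mul (by omega) (exists_isChainRealiser (zero_lt_one' ℕ)),
    chainDim_fin_le_clog_mul hs (by omega)⟩
end
end

section
/- Let P be a two-level poset with minimal elements A and maximal elements B (A and B disjoint, every relation in P goes from A to B), and let G be its bipartite incomparability graph: the bipartite graph on A ∪ B with edges {ab : a ∈ A, b ∈ B, a not < b}. Then the local complete bipartite covering number of G is at most the local 2-dimension of P. -/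
open Classical Finset Real
open scoped Classical

noncomputable section

/-- A family of complete bipartite subgraphs of `G` (each given by its two classes)
covering every edge of `G`. -/
def IsCBCover {V : Type*} [Fintype V] (G : SimpleGraph V)
    (C : Finset (Finset V × Finset V)) : Prop :=
  (∀ p ∈ C, ∀ s ∈ p.1, ∀ t ∈ p.2, G.Adj s t) ∧
  ∀ x y : V, G.Adj x y → ∃ p ∈ C, (x ∈ p.1 ∧ y ∈ p.2) ∨ (x ∈ p.2 ∧ y ∈ p.1)

/-- Multiplicity of a vertex in a complete bipartite edge-covering. -/
def cbMult {V : Type*} [Fintype V] (C : Finset (Finset V × Finset V)) (v : V) : ℕ :=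
  (C.filter fun p => v ∈ p.1 ∨ v ∈ p.2).card

/-- The local complete bipartite covering number of `G`. -/
def lbc {V : Type*} [Fintype V] (G : SimpleGraph V) : ℕ :=
  sInf {d | ∃ C : Finset (Finset V × Finset V), IsCBCover G C ∧ ∀ v, cbMult C v ≤ d}

/-- for a two-level poset `P` with minimal elements `A` and maximal
elements `B`, and `G` its bipartite incomparability graph, `lbc G ≤ ltdim₂ P`. -/
theorem lbc_le_ltdim_two (P : Type*) [PartialOrder P] [Fintype P]
    (A B : Set P) (hdisj : Disjoint A B) (hcover : ∀ x : P, x ∈ A ∨ x ∈ B)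
    (hAmin : ∀ x : P, x ∈ A → IsMin x) (hBmax : ∀ x : P, x ∈ B → IsMax x)
    (hlt : ∀ x y : P, x < y → x ∈ A ∧ y ∈ B)
    (G : SimpleGraph P)
    (hG : ∀ x y : P, G.Adj x y ↔
      (x ∈ A ∧ y ∈ B ∧ ¬ x < y) ∨ (x ∈ B ∧ y ∈ A ∧ ¬ y < x)) :
    lbc G ≤ ltdim 2 P := by
  classical
  have hne : {d | ∃ L : Finset (P → Option (Fin 2)), IsLocalRealiser L ∧
      ∀ x, mult L x ≤ d}.Nonempty := by
    set L : Finset (P → Option (Fin 2)) :=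
      Finset.univ.filter MonotonePartial with hLdef
    refine ⟨L.card, L, ⟨?_, ?_⟩, ?_⟩
    · intro f hf
      have := (Finset.mem_filter.mp hf).2
      simpa using this
    · intro x y hxy
      have hxney : x ≠ y := by rintro rfl; exact hxy le_rfl
      refine ⟨fun z => if z = x then some 0 else if z = y then some 1 else none,
        ?_, ?_⟩
      · rw [hLdef, Finset.mem_filter]
        refine ⟨Finset.mem_univ _, ?_⟩
        intro u v huv a b ha hb
        simp only [] at ha hb
        have hu : (u = x ∧ a = 0) ∨ (u = y ∧ a = 1) := by
          split_ifs at ha with h1 h2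
          · exact Or.inl ⟨h1, by injection ha with h; exact h.symm⟩
          · exact Or.inr ⟨h2, by injection ha with h; exact h.symm⟩
        have hv : (v = x ∧ b = 0) ∨ (v = y ∧ b = 1) := by
          split_ifs at hb with h1 h2
          · exact Or.inl ⟨h1, by injection hb with h; exact h.symm⟩
          · exact Or.inr ⟨h2, by injection hb with h; exact h.symm⟩
        rcases hu with ⟨hu1, rfl⟩ | ⟨hu1, rfl⟩
        · exact Fin.zero_le b
        · rcases hv with ⟨hv1, rfl⟩ | ⟨hv1, rfl⟩
          · exact absurd (hu1 ▸ hv1 ▸ huv) hxy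
          · exact le_refl _
      · exact ⟨0, 1, by simp, by simp [hxney.symm], by omega⟩
    · intro x
      exact Finset.card_filter_le _ _
  have hd := Nat.sInf_mem hne
  obtain ⟨L, ⟨hmono, hsep⟩, hmult⟩ := hd
  set toP : (P → Option (Fin 2)) → Finset P × Finset P := fun f =>
    (Finset.univ.filter (fun x => x ∈ A ∧ f x = some 1),
     Finset.univ.filter (fun x => x ∈ B ∧ f x = some 0)) with htoP
  set C : Finset (Finset P × Finset P) := L.image toP with hC
  have hlt01 : ∀ a b : Fin 2, a < b → a = 0 ∧ b = 1 := by
    intro a b hab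
    constructor <;> (apply Fin.ext; omega)
  refine Nat.sInf_le ⟨C, ⟨?_, ?_⟩, ?_⟩
  · intro p hp s hs t ht
    obtain ⟨f, hfL, rfl⟩ := Finset.mem_image.mp hp
    simp only [htoP, Finset.mem_filter] at hs ht
    obtain ⟨-, hsA, hs1⟩ := hs
    obtain ⟨-, htB, ht0⟩ := ht
    rw [hG]
    refine Or.inl ⟨hsA, htB, fun hst => ?_⟩
    have := hmono f hfL hst.le hs1 ht0
    omega
  · intro x y hxy
    rw [hG] at hxy
    have hxney : x ≠ y := by
      rintro rfl
      rcases hxy with ⟨h1, h2, -⟩ | ⟨h1, h2, -⟩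
      · exact Set.disjoint_left.mp hdisj h1 h2
      · exact Set.disjoint_left.mp hdisj h2 h1
    rcases hxy with ⟨hxA, hyB, hnlt⟩ | ⟨hxB, hyA, hnlt⟩
    · have hnle : ¬ x ≤ y := fun h => hnlt (lt_of_le_of_ne h hxney)
      obtain ⟨f, hfL, a, b, hfy, hfx, hab⟩ := hsep y x hnle
      obtain ⟨rfl, rfl⟩ := hlt01 a b hab
      exact ⟨toP f, Finset.mem_image_of_mem _ hfL,
        Or.inl ⟨by simp [htoP, hxA, hfx], by simp [htoP, hyB, hfy]⟩⟩
    · have hnle : ¬ y ≤ x := fun h => hnlt (lt_of_le_of_ne h hxney.symm)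
      obtain ⟨f, hfL, a, b, hfx, hfy, hab⟩ := hsep x y hnle
      obtain ⟨rfl, rfl⟩ := hlt01 a b hab
      exact ⟨toP f, Finset.mem_image_of_mem _ hfL,
        Or.inr ⟨by simp [htoP, hxB, hfx], by simp [htoP, hyA, hfy]⟩⟩
  · intro v
    calc cbMult C v
        = ((L.filter (fun f => v ∈ (toP f).1 ∨ v ∈ (toP f).2)).image toP).card := by
          rw [cbMult, hC, Finset.filter_image]
      _ ≤ (L.filter (fun f => v ∈ (toP f).1 ∨ v ∈ (toP f).2)).card :=
          Finset.card_image_le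
      _ ≤ mult L v := by
          apply Finset.card_le_card
          intro f hf
          rw [Finset.mem_filter] at hf ⊢
          refine ⟨hf.1, ?_⟩
          rcases hf.2 with h | h <;> simp only [htoP, Finset.mem_filter] at h <;>
            simp [h.2.2]
      _ ≤ ltdim 2 P := hmult v
end
end

section
/- Let P be a finite poset with n elements and let Q be its split. Then ldim_2(P) ≤ 2·ldim_2(Q) − 2, where ldim_2 denotes local 2-dimension (assuming ldim_2(Q) ≥ 1 and P is not a chain trivially realised). -/
open Classical Finset Real
open scoped Classical

noncomputable section

/-- The split of a poset `P`: minimal copies `inl x = x'` and maximal copies `inr x = x''`,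
with `x' ≤ y''` iff `x ≤ y` in `P`. -/
def Split (P : Type*) := P ⊕ P

instance {P : Type*} [DecidableEq P] : DecidableEq (Split P) :=
  inferInstanceAs (DecidableEq (P ⊕ P))
instance {P : Type*} [Fintype P] : Fintype (Split P) :=
  inferInstanceAs (Fintype (P ⊕ P))
instance {P : Type*} [PartialOrder P] : PartialOrder (Split P) where
  le a b :=
    Sum.elim (fun x => Sum.elim (fun y => x = y) (fun y => x ≤ y) b)
      (fun x => Sum.elim (fun _ => False) (fun y => x = y) b) a
  le_refl a := by cases a <;> simp
  le_trans a b c h1 h2 := by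
    cases a <;> cases b <;> cases c <;> simp_all
  le_antisymm a b h1 h2 := by
    cases a <;> cases b <;> simp_all <;> subst_vars <;> rfl

/-! A local 2-realiser `R` of the split induces one of `P`: `f ∈ R` gives `f'` with `f' x = 1`
when `f x' = 1`, `f' x = 0` when `f x'' = 0`, and `x ∉ dom f'` otherwise. As `x' ≤ y''` whenever
`x ≤ y`, monotonicity of `f` excludes `f x' = 1, f y'' = 0`, so `f'` is monotone, and `f`
separating `(x'', y')` means `f'` separates `(x, y)`. The member `g` separating `(x', x'')` has
`g x' = 0, g x'' = 1`: it counts towards both `μ(x')` and `μ(x'')` but not towards `μ(x)`,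
whence `μ(x) ≤ (μ(x') - 1) + (μ(x'') - 1)`. -/

theorem Fin.two_eq_zero_and_eq_one_of_lt {a b : Fin 2} (h : a < b) : a = 0 ∧ b = 1 := by
  revert a b; decide

theorem mult_image_le {α γ : Type*} {s t : ℕ} (L : Finset (α → Option (Fin s)))
    (F : (α → Option (Fin s)) → γ → Option (Fin t)) (x : γ) :
    mult (L.image F) x ≤ (L.filter fun f => (F f x).isSome).card := by
  unfold mult
  rw [Finset.filter_image]
  exact Finset.card_image_le

theorem ltdim_le_of_isLocalRealiser {P : Type*} [PartialOrder P] {t d : ℕ}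
    {L : Finset (P → Option (Fin t))} (hL : IsLocalRealiser L) (hd : ∀ x, mult L x ≤ d) :
    ltdim t P ≤ d :=
  Nat.sInf_le ⟨L, hL, hd⟩

theorem exists_isLocalRealiser_of_ltdim_pos {P : Type*} [PartialOrder P] {t : ℕ}
    (h : 0 < ltdim t P) :
    ∃ L : Finset (P → Option (Fin t)), IsLocalRealiser L ∧ ∀ x, mult L x ≤ ltdim t P :=
  Nat.sInf_mem (Nat.nonempty_of_pos_sInf h)

namespace Split

variable {P : Type*}

def restrict (f : Split P → Option (Fin 2)) (x : P) : Option (Fin 2) :=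
  if f (Sum.inl x) = some 1 then some 1 else if f (Sum.inr x) = some 0 then some 0 else none

theorem restrict_eq_some_one {f : Split P → Option (Fin 2)} {x : P} :
    restrict f x = some 1 ↔ f (Sum.inl x) = some 1 := by
  unfold restrict; split_ifs <;> simp_all

theorem restrict_eq_some_zero {f : Split P → Option (Fin 2)} {x : P} :
    restrict f x = some 0 ↔ f (Sum.inl x) ≠ some 1 ∧ f (Sum.inr x) = some 0 := by
  unfold restrict; split_ifs <;> simp_all

theorem isSome_restrict {f : Split P → Option (Fin 2)} {x : P} :
    (restrict f x).isSome ↔ f (Sum.inl x) = some 1 ∨ f (Sum.inr x) = some 0 := by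
  unfold restrict; split_ifs <;> simp_all

variable [PartialOrder P]

theorem inl_le_inr_iff {x y : P} : @LE.le (Split P) _ (Sum.inl x) (Sum.inr y) ↔ x ≤ y := Iff.rfl

theorem not_inr_le_inl (x y : P) : ¬ @LE.le (Split P) _ (Sum.inr x) (Sum.inl y) := id

theorem _root_.MonotonePartial.split_inl_ne_one {f : Split P → Option (Fin 2)}
    (hf : MonotonePartial f) {x y : P} (hxy : x ≤ y) (hy : f (Sum.inr y) = some 0) :
    f (Sum.inl x) ≠ some 1 := fun hx =>
  absurd (hf (inl_le_inr_iff.2 hxy) hx hy) (by decide)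

theorem _root_.MonotonePartial.restrict {f : Split P → Option (Fin 2)}
    (hf : MonotonePartial f) : MonotonePartial (restrict f) := by
  intro x y hxy a b ha hb
  by_contra hba
  obtain ⟨rfl, rfl⟩ := Fin.two_eq_zero_and_eq_one_of_lt (not_le.1 hba)
  have hx : f (Sum.inl x) = some 1 := restrict_eq_some_one.1 ha
  have hy : f (Sum.inr y) = some 0 := (restrict_eq_some_zero.1 hb).2
  exact hf.split_inl_ne_one hxy hy hx

theorem _root_.Separates.restrict {f : Split P → Option (Fin 2)} (hf : MonotonePartial f)
    {x y : P} (hs : Separates f (Sum.inr x) (Sum.inl y)) : Separates (restrict f) x y := by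
  obtain ⟨a, b, ha, hb, hab⟩ := hs
  obtain ⟨rfl, rfl⟩ := Fin.two_eq_zero_and_eq_one_of_lt hab
  exact ⟨0, 1, restrict_eq_some_zero.2 ⟨hf.split_inl_ne_one le_rfl ha, ha⟩,
    restrict_eq_some_one.2 hb, by decide⟩

theorem _root_.IsLocalRealiser.image_restrict {L : Finset (Split P → Option (Fin 2))}
    (hL : IsLocalRealiser L) : IsLocalRealiser (L.image restrict) := by
  refine ⟨?_, fun x y hyx => ?_⟩
  · simp only [Finset.mem_image, forall_exists_index, and_imp, forall_apply_eq_imp_iff₂]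
    exact fun f hf => (hL.1 f hf).restrict
  · obtain ⟨f, hf, hs⟩ := hL.2 (Sum.inr x) (Sum.inl y) (mt inl_le_inr_iff.1 hyx)
    exact ⟨restrict f, Finset.mem_image_of_mem _ hf, hs.restrict (hL.1 f hf)⟩

theorem mult_image_restrict_le {L : Finset (Split P → Option (Fin 2))}
    (hL : IsLocalRealiser L) (x : P) :
    mult (L.image restrict) x ≤ (mult L (Sum.inl x) - 1) + (mult L (Sum.inr x) - 1) := by
  obtain ⟨g, hg, a, b, hga, hgb, hab⟩ := hL.2 (Sum.inl x) (Sum.inr x) (not_inr_le_inl x x)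
  obtain ⟨rfl, rfl⟩ := Fin.two_eq_zero_and_eq_one_of_lt hab
  have hg' : g ∈ L.filter fun f => (f (Sum.inl x)).isSome := by simp [hg, hga]
  have hg'' : g ∈ L.filter fun f => (f (Sum.inr x)).isSome := by simp [hg, hgb]
  have hsub : (L.filter fun f => (restrict f x).isSome) ⊆
      ((L.filter fun f => (f (Sum.inl x)).isSome).erase g) ∪
        ((L.filter fun f => (f (Sum.inr x)).isSome).erase g) := by
    intro f hf
    obtain ⟨hfL, hfx⟩ := Finset.mem_filter.1 hf
    have hfg : f ≠ g := by rintro rfl; simp [isSome_restrict, hga, hgb] at hfx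
    rcases isSome_restrict.1 hfx with h | h <;> simp [hfL, hfg, h]
  calc mult (L.image restrict) x ≤ (L.filter fun f => (restrict f x).isSome).card :=
        mult_image_le L restrict x
    _ ≤ _ := (Finset.card_le_card hsub).trans (Finset.card_union_le _ _)
    _ = (mult L (Sum.inl x) - 1) + (mult L (Sum.inr x) - 1) := by
        rw [Finset.card_erase_of_mem hg', Finset.card_erase_of_mem hg'']; rfl

end Split

theorem ltdim_split_general (P : Type*) [PartialOrder P]
    (hQ : 1 ≤ ltdim 2 (Split P)) :
    ltdim 2 P ≤ 2 * ltdim 2 (Split P) - 2 := by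
  obtain ⟨L, hL, hLmult⟩ := exists_isLocalRealiser_of_ltdim_pos hQ
  refine ltdim_le_of_isLocalRealiser hL.image_restrict fun x => ?_
  have hx' := hLmult (Sum.inl x)
  have hx'' := hLmult (Sum.inr x)
  have := Split.mult_image_restrict_le hL x
  omega

/-- if `Q` is the split of a finite poset `P`, then
`ltdim₂ P ≤ 2·ltdim₂ Q − 2` (given `ltdim₂ Q ≥ 1`). -/
theorem ltdim_split (P : Type*) [PartialOrder P] [Fintype P]
    (hQ : 1 ≤ ltdim 2 (Split P)) :
    ltdim 2 P ≤ 2 * ltdim 2 (Split P) - 2 :=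
  ltdim_split_general P hQ
end
end

section
/- For all integers n ≥ t ≥ 2, the fractional t-dimension of the n-element chain equals (n−1)/(t−1). -/
open Classical Finset Real
open scoped Classical

noncomputable section

/-- The fractional `t`-dimension: minimal total weight of a nonnegative weighting of
monotone total functions `P → Fin t` separating every pair `x ≱ y` with weight at least 1. -/
def ftdim (t : ℕ) (P : Type*) [PartialOrder P] [Fintype P] [DecidableEq P] : ℝ :=
  sInf {s : ℝ | ∃ w : (P → Fin t) → ℝ,
    (∀ f, 0 ≤ w f) ∧ (∀ f, ¬ Monotone f → w f = 0) ∧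
    (∀ x y : P, ¬ y ≤ x → 1 ≤ ∑ f : P → Fin t, if f x < f y then w f else 0) ∧
    s = ∑ f : P → Fin t, w f}

/-- The fractional local `t`-dimension: minimal possible maximum (over points `x`) of the
total weight of monotone partial functions whose domain contains `x`, over nonnegative
weightings of monotone partial functions separating every pair `x ≱ y` with weight ≥ 1. -/
def fltdim (t : ℕ) (P : Type*) [PartialOrder P] [Fintype P] [DecidableEq P] : ℝ :=
  sInf {s : ℝ | ∃ w : (P → Option (Fin t)) → ℝ,
    (∀ f, 0 ≤ w f) ∧ (∀ f, ¬ MonotonePartial f → w f = 0) ∧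
    (∀ x y : P, ¬ y ≤ x →
      1 ≤ ∑ f : P → Option (Fin t), if Separates f x y then w f else 0) ∧
    ∀ x : P, (∑ f : P → Option (Fin t), if (f x).isSome then w f else 0) ≤ s}

private lemma mod_add_cancel {m a b c : ℕ} (hb : b < m) (hc : c < m)
    (h : (b + a) % m = (c + a) % m) : b = c := by
  have h2 : b ≡ c [MOD m] := Nat.ModEq.add_right_cancel' a h
  rwa [Nat.ModEq, Nat.mod_eq_of_lt hb, Nat.mod_eq_of_lt hc] at h2

private lemma mod_sub_cancel {m a b c : ℕ} (hb : b < m) (hc : c < m)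
    (hba : b ≤ a) (hca : c ≤ a)
    (h : (a - b) % m = (a - c) % m) : b = c := by
  have h2 : (a - b) + (b + c) ≡ (a - c) + (b + c) [MOD m] := Nat.ModEq.add_right _ h
  have e1 : a - b + (b + c) = c + a := by omega
  have e2 : a - c + (b + c) = b + a := by omega
  rw [e1, e2] at h2
  exact (mod_add_cancel hc hb h2).symm

def ecnt (m t j x : ℕ) : ℕ :=
  ((Finset.range x).filter (fun i => (i + (m - j)) % m < t - 1)).card

lemma ecnt_le (m t j x : ℕ) (hx : x ≤ m) : ecnt m t j x ≤ t - 1 := by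
  classical
  have := Finset.card_le_card_of_injOn
    (s := (Finset.range x).filter (fun i => (i + (m - j)) % m < t - 1))
    (t := Finset.range (t - 1)) (fun i => (i + (m - j)) % m)
    (fun i hi => Finset.mem_range.2 (Finset.mem_filter.1 hi).2)
    (fun i hi i' hi' hii => by
      simp only [Finset.coe_filter, Set.mem_setOf_eq, Finset.mem_range] at hi hi'
      exact mod_add_cancel (lt_of_lt_of_le hi.1 hx) (lt_of_lt_of_le hi'.1 hx) hii)
  simpa [ecnt] using this

lemma ecnt_mono (m t j : ℕ) {x y : ℕ} (h : x ≤ y) : ecnt m t j x ≤ ecnt m t j y :=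
  Finset.card_le_card (Finset.filter_subset_filter _ (Finset.range_subset_range.2 h))

lemma ecnt_succ (m t j x : ℕ) (h : (x + (m - j)) % m < t - 1) :
    ecnt m t j (x + 1) = ecnt m t j x + 1 := by
  unfold ecnt
  rw [Finset.range_add_one, Finset.filter_insert, if_pos h,
    Finset.card_insert_of_notMem (fun hx => by simpa using (Finset.mem_filter.1 hx).1)]

lemma cover_card (m t x : ℕ) (hm : 0 < m) (htm : t - 1 ≤ m) (hx : x < m) :
    t - 1 ≤ ((Finset.range m).filter (fun j => (x + (m - j)) % m < t - 1)).card := by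
  classical
  have key : ∀ v < t - 1, (x + (m - ((x + m - v) % m))) % m = v := by
    intro v hv
    have hvm : v < m := lt_of_lt_of_le hv htm
    rcases Nat.lt_or_ge (x + m - v) m with h | h
    · have hr : (x + m - v) % m = x + m - v := Nat.mod_eq_of_lt h
      rw [hr]
      have e : x + (m - (x + m - v)) = v := by omega
      rw [e, Nat.mod_eq_of_lt hvm]
    · have h2 : x + m - v - m < m := by omega
      have hr : (x + m - v) % m = x + m - v - m := by
        rw [Nat.mod_eq_sub_mod h, Nat.mod_eq_of_lt h2]
      rw [hr]
      have e : x + (m - (x + m - v - m)) = m + v := by omega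
      rw [e, Nat.add_mod_left, Nat.mod_eq_of_lt hvm]
  have := Finset.card_le_card_of_injOn (s := Finset.range (t - 1))
    (t := (Finset.range m).filter (fun j => (x + (m - j)) % m < t - 1))
    (fun v => (x + m - v) % m)
    (fun v hv => by
      have hv' := Finset.mem_range.1 hv
      refine Finset.mem_filter.2 ⟨Finset.mem_range.2 (Nat.mod_lt _ hm), ?_⟩
      rw [key v hv']; exact hv')
    (fun v hv v' hv' hvv => by
      simp only [Finset.coe_range, Set.mem_Iio] at hv hv'
      exact mod_sub_cancel (lt_of_lt_of_le hv htm) (lt_of_lt_of_le hv' htm)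
        (by omega) (by omega) hvv)
  simpa using this

/-- the fractional `t`-dimension of the `n`-element chain is `(n−1)/(t−1)`. -/
theorem ftdim_chain (n t : ℕ) (ht : 2 ≤ t) (htn : t ≤ n) :
    ftdim t (Fin n) = ((n : ℝ) - 1) / ((t : ℝ) - 1) := by
  classical
  set m := n - 1 with hm_def
  have hn : n = m + 1 := by omega
  have hm : 1 ≤ m := by omega
  have htm : t - 1 ≤ m := by omega
  have ht2 : (2:ℝ) ≤ (t:ℝ) := by exact_mod_cast ht
  have htpos : (0:ℝ) < (t:ℝ) - 1 := by linarith
  have htne : (t:ℝ) - 1 ≠ 0 := ne_of_gt htpos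
  have hcast : ((t - 1 : ℕ) : ℝ) = (t:ℝ) - 1 := by
    have : 1 ≤ t := by omega
    push_cast [this]; ring
  have hval : ∀ (j : ℕ) (x : Fin n), ecnt m t j x.val < t := by
    intro j x
    have hx := x.isLt
    exact lt_of_le_of_lt (ecnt_le m t j x.val (by omega)) (by omega)
  set F : ℕ → Fin n → Fin t := fun j x => ⟨ecnt m t j x.val, hval j x⟩ with hF
  have hFmono : ∀ j, Monotone (F j) := by
    intro j x y hxy
    exact Fin.mk_le_mk.2 (ecnt_mono m t j hxy)
  have hsep : ∀ (j : ℕ) (x y : Fin n), x < y →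
      (x.val + (m - j)) % m < t - 1 → F j x < F j y := by
    intro j x y hxy hc
    have h1 : ecnt m t j (x.val + 1) = ecnt m t j x.val + 1 := ecnt_succ m t j x.val hc
    have h2 : ecnt m t j (x.val + 1) ≤ ecnt m t j y.val := ecnt_mono m t j hxy
    exact Fin.mk_lt_mk.2 (by omega)
  set c : ℝ := ((t:ℝ) - 1)⁻¹ with hc_def
  have hcpos : 0 < c := inv_pos.2 htpos
  set w : (Fin n → Fin t) → ℝ := fun f => ∑ j ∈ Finset.range m, if F j = f then c else 0 with hw
  have hw_nonneg : ∀ f, 0 ≤ w f := by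
    intro f
    refine Finset.sum_nonneg fun j _ => ?_
    split_ifs
    · exact le_of_lt hcpos
    · exact le_refl 0
  have hw_mono : ∀ f, ¬ Monotone f → w f = 0 := by
    intro f hf
    refine Finset.sum_eq_zero fun j _ => ?_
    rw [if_neg]
    intro hEq
    exact hf (hEq ▸ hFmono j)
  have hw_total : ∑ f : Fin n → Fin t, w f = (m:ℝ) * c := by
    rw [hw, Finset.sum_comm]
    simp [Finset.sum_ite_eq]
  have hw_cov : ∀ x y : Fin n, ¬ y ≤ x →
      1 ≤ ∑ f : Fin n → Fin t, if f x < f y then w f else 0 := by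
    intro x y hxy
    have hxy' : x < y := not_le.1 hxy
    have hxm : x.val < m := by
      have h1 : x.val < y.val := hxy'
      have h2 := y.isLt
      omega
    have step1 : ∑ f : Fin n → Fin t, (if f x < f y then w f else 0)
        = ∑ j ∈ Finset.range m, (if F j x < F j y then c else 0) := by
      calc ∑ f : Fin n → Fin t, (if f x < f y then w f else 0)
          = ∑ f : Fin n → Fin t, ∑ j ∈ Finset.range m,
              (if F j = f then (if f x < f y then c else 0) else 0) := by
            refine Finset.sum_congr rfl fun f _ => ?_
            by_cases h : f x < f y
            · simp [hw, h]
            · simp [h]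
        _ = ∑ j ∈ Finset.range m, ∑ f : Fin n → Fin t,
              (if F j = f then (if f x < f y then c else 0) else 0) := Finset.sum_comm
        _ = ∑ j ∈ Finset.range m, (if F j x < F j y then c else 0) := by
            refine Finset.sum_congr rfl fun j _ => ?_
            rw [Finset.sum_ite_eq]
            simp
    rw [step1]
    set S' := (Finset.range m).filter (fun j => (x.val + (m - j)) % m < t - 1) with hS'
    have hge : ∑ j ∈ S', (if F j x < F j y then c else 0)
        ≤ ∑ j ∈ Finset.range m, (if F j x < F j y then c else 0) := by
      refine Finset.sum_le_sum_of_subset_of_nonneg (Finset.filter_subset _ _) fun j _ _ => ?_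
      split_ifs
      · exact le_of_lt hcpos
      · exact le_refl 0
    have heq : ∑ j ∈ S', (if F j x < F j y then c else 0) = (S'.card : ℝ) * c := by
      rw [Finset.sum_congr rfl fun j hj =>
        if_pos (hsep j x y hxy' (Finset.mem_filter.1 hj).2), Finset.sum_const,
        nsmul_eq_mul]
    have hcard : t - 1 ≤ S'.card := cover_card m t x.val (by omega) htm hxm
    have h1 : ((t - 1 : ℕ) : ℝ) * c ≤ (S'.card : ℝ) * c :=
      mul_le_mul_of_nonneg_right (by exact_mod_cast hcard) (le_of_lt hcpos)
    have h2 : ((t - 1 : ℕ) : ℝ) * c = 1 := by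
      rw [hcast, hc_def]; exact mul_inv_cancel₀ htne
    linarith
  have htarget : ((n:ℝ) - 1) / ((t:ℝ) - 1) = (m:ℝ) * c := by
    rw [hc_def, div_eq_mul_inv]
    congr 1
    rw [hn]; push_cast; ring
  have hfin : ((n:ℝ) - 1) / ((t:ℝ) - 1) = ∑ f : Fin n → Fin t, w f := by
    rw [hw_total]; exact htarget
  rw [ftdim]
  apply le_antisymm
  · refine csInf_le ⟨0, ?_⟩ ?_
    · rintro s ⟨w', hw0', _, _, hs⟩
      rw [hs]
      exact Finset.sum_nonneg fun f _ => hw0' f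
    · exact ⟨w, hw_nonneg, hw_mono, hw_cov, hfin⟩
  · refine le_csInf ⟨_, ⟨w, hw_nonneg, hw_mono, hw_cov, hfin⟩⟩ ?_
    rintro s ⟨w', hw0, hwm, hcov, hs⟩
    haveI : NeZero t := ⟨by omega⟩
    set a : Fin m → Fin n := fun i => ⟨i.val, by have := i.isLt; omega⟩ with ha
    set b : Fin m → Fin n := fun i => ⟨i.val + 1, by have := i.isLt; omega⟩ with hb
    have h1 : ∀ i : Fin m, (1:ℝ) ≤ ∑ f : Fin n → Fin t,
        (if f (a i) < f (b i) then w' f else 0) := by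
      intro i
      refine hcov (a i) (b i) ?_
      simp only [ha, hb, Fin.mk_le_mk]
      omega
    have hcardle : ∀ f : Fin n → Fin t, Monotone f →
        (Finset.univ.filter (fun i : Fin m => f (a i) < f (b i))).card ≤ t - 1 := by
      intro f hf
      have hc := Finset.card_le_card_of_injOn
        (s := Finset.univ.filter (fun i : Fin m => f (a i) < f (b i)))
        (t := Finset.univ.erase (0 : Fin t)) (fun i => f (b i))
        (fun i hi => by
          have hlt : f (a i) < f (b i) := (Finset.mem_filter.1 hi).2
          refine Finset.mem_erase.2 ⟨fun h0 => ?_, Finset.mem_univ _⟩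
          rw [show f (b i) = 0 from h0] at hlt
          have hv := Fin.lt_def.1 hlt
          simp at hv)
        (fun i hi j hj hij => by
          simp only [Finset.coe_filter, Set.mem_setOf_eq] at hi hj
          by_contra hne
          have hvne : i.val ≠ j.val := fun h => hne (Fin.ext h)
          rcases Nat.lt_or_ge i.val j.val with hlt | hge
          · have hle : b i ≤ a j := Fin.mk_le_mk.2 (by omega)
            have : f (b i) < f (b j) := lt_of_le_of_lt (hf hle) hj.2
            exact absurd hij (ne_of_lt this)
          · have hlt' : j.val < i.val := by omega
            have hle : b j ≤ a i := Fin.mk_le_mk.2 (by omega)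
            have : f (b j) < f (b i) := lt_of_le_of_lt (hf hle) hi.2
            exact absurd hij.symm (ne_of_lt this))
      have : (Finset.univ.erase (0 : Fin t)).card = t - 1 := by
        rw [Finset.card_erase_of_mem (Finset.mem_univ _), Finset.card_univ, Fintype.card_fin]
      omega
    have hsum : (m:ℝ) ≤ ((t - 1 : ℕ):ℝ) * s := by
      have e1 : (m:ℝ) = ∑ _i : Fin m, (1:ℝ) := by simp
      have e2 : ∑ _i : Fin m, (1:ℝ) ≤ ∑ i : Fin m, ∑ f : Fin n → Fin t,
          (if f (a i) < f (b i) then w' f else 0) :=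
        Finset.sum_le_sum fun i _ => h1 i
      have e3 : ∑ i : Fin m, ∑ f : Fin n → Fin t,
          (if f (a i) < f (b i) then w' f else 0)
          = ∑ f : Fin n → Fin t,
            (((Finset.univ.filter (fun i : Fin m => f (a i) < f (b i))).card : ℝ)) * w' f := by
        rw [Finset.sum_comm]
        refine Finset.sum_congr rfl fun f _ => ?_
        rw [← Finset.sum_filter, Finset.sum_const, nsmul_eq_mul]
      have e4 : ∑ f : Fin n → Fin t,
          (((Finset.univ.filter (fun i : Fin m => f (a i) < f (b i))).card : ℝ)) * w' f
          ≤ ∑ f : Fin n → Fin t, ((t - 1 : ℕ):ℝ) * w' f := by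
        refine Finset.sum_le_sum fun f _ => ?_
        by_cases hf : Monotone f
        · exact mul_le_mul_of_nonneg_right (by exact_mod_cast hcardle f hf) (hw0 f)
        · simp [hwm f hf]
      have e5 : ∑ f : Fin n → Fin t, ((t - 1 : ℕ):ℝ) * w' f = ((t - 1 : ℕ):ℝ) * s := by
        rw [← Finset.mul_sum, ← hs]
      linarith [e2, e3.le, e3.ge]
    rw [div_le_iff₀ htpos]
    have hmn : (m:ℝ) = (n:ℝ) - 1 := by rw [hn]; push_cast; ring
    rw [hcast] at hsum
    linarith
end
end

section
/- For every integer t ≥ 2 there is a constant C_t such that for all n, the fractional local t-dimension of the n-element chain is at least (ln n)/(ln t + 1/2) − C_t. In particular it is at least log base (√e · t) of n minus (2 − 2γ)/(2 ln t + 1), where γ is Euler's constant. -/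
/-!
Weak LP duality: if `I ≥ 0` weights the pairs `x ≱ y` so that every monotone partial map into
the `t`-chain separates pairs of total weight at most `c` times the size of its domain, then
averaging the separation constraints against `I` and the load constraints uniformly gives
`fltdim t P ≥ ∑ I / (c |P|)`. On the `n`-chain take `I(x, y) = 1 / (y - x)`, of total weight
`n H_n - n`. For a monotone partial map with domain of size `k` and level sets of sizes `m_b`,
the points separated from `y` are the `p` points of the domain below `y` except the last `r`,
those of `y`'s own level, so they contribute at most `H_p - H_r`; summing over `y` gives at most
`k H_k - ∑ m_b H_{m_b}`, which `H_k ≤ log k + 1`, `H_m ≥ log m + 1/2` and Jensen for `x log x`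
bound by `k (log t + 1/2)`. Finally `H_n > log n + γ`.
-/

open Classical Finset Real
open scoped Classical

noncomputable section

lemma sum_range_inv_sub_eq_harmonic (j : ℕ) :
    ∑ i ∈ range j, ((j : ℝ) - i)⁻¹ = harmonic j := by
  rw [← sum_range_reflect, harmonic]
  push_cast
  refine sum_congr rfl fun i hi => ?_
  have hij : i + 1 ≤ j := mem_range.mp hi
  rw [show j - 1 - i = j - (i + 1) by omega, Nat.cast_sub hij]
  push_cast
  ring

lemma sum_range_harmonic (m : ℕ) :
    ∑ j ∈ range m, (harmonic j : ℝ) = m * harmonic m - m := by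
  induction m with
  | zero => simp
  | succ m ih =>
    rw [sum_range_succ, ih, harmonic_succ]
    push_cast
    field_simp
    ring

lemma mul_harmonic_le (k : ℕ) : (k : ℝ) * harmonic k ≤ k * log k + k := by
  nlinarith [harmonic_le_one_add_log k, (Nat.cast_nonneg k : (0 : ℝ) ≤ k)]

lemma log_add_eulerMascheroniConstant_lt_harmonic {m : ℕ} (hm : m ≠ 0) :
    log m + eulerMascheroniConstant < harmonic m := by
  have := eulerMascheroniConstant_lt_eulerMascheroniSeq' m
  rw [eulerMascheroniSeq', if_neg hm] at this
  linarith

lemma mul_log_add_half_le_mul_harmonic (m : ℕ) :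
    (m : ℝ) * log m + m / 2 ≤ m * harmonic m := by
  rcases eq_or_ne m 0 with rfl | hm
  · simp
  · nlinarith [log_add_eulerMascheroniConstant_lt_harmonic hm, one_half_lt_eulerMascheroniConstant,
      (Nat.cast_nonneg m : (0 : ℝ) ≤ m)]

lemma le_sum_mul_log {ι : Type*} (s : Finset ι) (m : ι → ℝ) (hm : ∀ i ∈ s, 0 ≤ m i) :
    (∑ i ∈ s, m i) * (log (∑ i ∈ s, m i) - log #s) ≤ ∑ i ∈ s, m i * log (m i) := by
  rcases s.eq_empty_or_nonempty with rfl | hs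
  · simp
  have hN : (0 : ℝ) < #s := by exact_mod_cast hs.card_pos
  have jensen := convexOn_mul_log.map_sum_le (t := s) (w := fun _ => (#s : ℝ)⁻¹) (p := m)
    (fun _ _ => by positivity) (by simp [hN.ne']) hm
  simp only [smul_eq_mul, ← mul_sum] at jensen
  have hlog : (∑ i ∈ s, m i) * log ((#s : ℝ)⁻¹ * ∑ i ∈ s, m i)
      = (∑ i ∈ s, m i) * (log (∑ i ∈ s, m i) - log #s) := by
    rcases eq_or_ne (∑ i ∈ s, m i) 0 with hM | hM
    · simp [hM]
    · rw [log_mul (inv_ne_zero hN.ne') hM, log_inv]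
      ring
  have := mul_le_mul_of_nonneg_left jensen hN.le
  rw [← hlog]
  calc _ = (#s : ℝ) * (((#s : ℝ)⁻¹ * ∑ i ∈ s, m i) * log ((#s : ℝ)⁻¹ * ∑ i ∈ s, m i)) := by
        field_simp
    _ ≤ _ := this
    _ = _ := by field_simp

lemma mul_harmonic_sub_sum_mul_harmonic_le {ι : Type*} (s : Finset ι) (m : ι → ℕ) :
    ((∑ i ∈ s, m i : ℕ) : ℝ) * harmonic (∑ i ∈ s, m i) - ∑ i ∈ s, (m i : ℝ) * harmonic (m i)
      ≤ (∑ i ∈ s, m i : ℕ) * (log #s + 1 / 2) := by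
  have hk := mul_harmonic_le (∑ i ∈ s, m i)
  have hm := sum_le_sum fun i (_ : i ∈ s) => mul_log_add_half_le_mul_harmonic (m i)
  have jensen := le_sum_mul_log s (fun i => (m i : ℝ)) fun i _ => Nat.cast_nonneg _
  rw [sum_add_distrib, ← sum_div] at hm
  push_cast at hk jensen ⊢
  nlinarith

lemma sum_comp_card_filter_lt {α M : Type*} [LinearOrder α] [AddCommMonoid M]
    (S : Finset α) (g : ℕ → M) :
    ∑ y ∈ S, g #{x ∈ S | x < y} = ∑ j ∈ range #S, g j := by
  induction S using Finset.induction_on_max with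
  | empty => simp
  | insert a S ha ih =>
    have hlt : ∀ y ∈ S, {x ∈ insert a S | x < y} = {x ∈ S | x < y} := fun y hy => by
      rw [filter_insert, if_neg (not_lt.mpr (ha y hy).le)]
    have htop : {x ∈ insert a S | x < a} = S := by
      rw [filter_insert, if_neg (lt_irrefl a), filter_true_of_mem ha]
    have ha' : a ∉ S := fun h => lt_irrefl a (ha a h)
    rw [sum_insert ha', htop, sum_congr rfl fun y hy => congrArg g (congrArg card (hlt y hy)), ih,
      card_insert_of_notMem ha', sum_range_succ, add_comm]

lemma sum_inv_sub_le_harmonic_sub (S : Finset ℕ) {y r : ℕ} (hr : ∀ x ∈ S, x + r < y) :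
    ∑ x ∈ S, ((y : ℝ) - x)⁻¹ ≤ harmonic (r + #S) - harmonic r := by
  induction S using Finset.induction_on_max generalizing r with
  | empty => simp
  | insert a S ha ih =>
    have ha' : a ∉ S := fun h => lt_irrefl a (ha a h)
    have hay : a + r < y := hr a (mem_insert_self a S)
    have hS := ih (r := r + 1) fun x hx => by linarith [ha x hx]
    have hfirst : ((y : ℝ) - a)⁻¹ ≤ ((r : ℝ) + 1)⁻¹ := by
      have : (a : ℝ) + r + 1 ≤ y := by exact_mod_cast hay
      gcongr
      linarith
    rw [sum_insert ha', card_insert_of_notMem ha']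
    have e1 := harmonic_succ r
    rw [show r + 1 + #S = r + (#S + 1) by ring] at hS
    push_cast [e1] at hS ⊢
    linarith

section PartialMaps

variable {α β : Type*} [Fintype α]

def partialDomain (f : α → Option β) : Finset α := {x | (f x).isSome}

def level (f : α → Option β) (b : β) : Finset α := {x | f x = some b}

lemma sum_partialDomain_eq_sum_level [Fintype β] {M : Type*} [AddCommMonoid M]
    (f : α → Option β) (g : α → M) :
    ∑ y ∈ partialDomain f, g y = ∑ b, ∑ y ∈ level f b, g y := by
  have hnone : {y ∈ partialDomain f | f y = none} = ∅ := by
    ext y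
    simp [partialDomain, Option.isSome_iff_ne_none]
  have hsome (b : β) : {y ∈ partialDomain f | f y = some b} = level f b := by
    ext y
    simp +contextual [partialDomain, level]
  rw [← sum_fiberwise (partialDomain f) f g, Fintype.sum_option, hnone, sum_empty, zero_add]
  simp only [hsome]

end PartialMaps

lemma separates_iff_of_eq_some {P : Type*} {t : ℕ} {f : P → Option (Fin t)} {x y : P}
    {b : Fin t} (hy : f y = some b) : Separates f x y ↔ ∃ a, f x = some a ∧ a < b := by
  simp [Separates, hy]

section Separation

variable {P : Type*} [PartialOrder P] {t : ℕ} {f : P → Option (Fin t)} {x y : P}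

lemma MonotonePartial.not_le_of_lt {a b : Fin t} (hf : MonotonePartial f) (hx : f x = some a)
    (hy : f y = some b) (hab : a < b) : ¬ y ≤ x :=
  fun hyx => (hf hyx hy hx).not_gt hab

lemma MonotonePartial.not_le_of_separates (hf : MonotonePartial f) (h : Separates f x y) :
    ¬ y ≤ x := by
  obtain ⟨a, b, ha, hb, hab⟩ := h
  exact hf.not_le_of_lt ha hb hab

lemma exists_monotonePartial_separates (ht : 2 ≤ t) (hxy : ¬ y ≤ x) :
    ∃ f : P → Option (Fin t), MonotonePartial f ∧ Separates f x y := by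
  have hne : y ≠ x := fun h => hxy h.le
  let f : P → Option (Fin t) := fun z =>
    if z = x then some (Fin.castLE ht 0) else if z = y then some (Fin.castLE ht 1) else none
  refine ⟨f, fun z z' hzz' a b ha hb => ?_, Fin.castLE ht 0, Fin.castLE ht 1, by simp [f],
    by simp [f, hne], by simp [Fin.lt_def]⟩
  simp only [f] at ha hb
  split_ifs at ha hb <;> cases ha <;> cases hb <;> simp_all [Fin.le_def]

end Separation

section Duality

variable {P : Type*} [PartialOrder P] [Fintype P] [DecidableEq P] {t : ℕ}

def IsFractionalLocalRealiser (w : (P → Option (Fin t)) → ℝ) (s : ℝ) : Prop :=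
  (∀ f, 0 ≤ w f) ∧ (∀ f, ¬ MonotonePartial f → w f = 0) ∧
    (∀ x y : P, ¬ y ≤ x →
      1 ≤ ∑ f : P → Option (Fin t), if Separates f x y then w f else 0) ∧
    ∀ x : P, (∑ f : P → Option (Fin t), if (f x).isSome then w f else 0) ≤ s

lemma fltdim_eq_sInf :
    fltdim t P = sInf {s | ∃ w : (P → Option (Fin t)) → ℝ, IsFractionalLocalRealiser w s} :=
  rfl

lemma exists_isFractionalLocalRealiser (ht : 2 ≤ t) :
    ∃ (s : ℝ) (w : (P → Option (Fin t)) → ℝ), IsFractionalLocalRealiser w s := by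
  let w : (P → Option (Fin t)) → ℝ := fun f => if MonotonePartial f then 1 else 0
  have hw0 (f : P → Option (Fin t)) : 0 ≤ w f := by
    simp only [w]
    split_ifs <;> norm_num
  refine ⟨∑ f, w f, w, hw0, fun f hf => if_neg hf, fun x y hxy => ?_, fun x => ?_⟩
  · obtain ⟨f, hf, hsep⟩ := exists_monotonePartial_separates ht hxy
    calc (1 : ℝ) = if Separates f x y then w f else 0 := by simp [w, hf, hsep]
      _ ≤ _ := single_le_sum (f := fun g => if Separates g x y then w g else 0)
          (fun g _ => by split_ifs <;> simp [hw0]) (mem_univ f)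
  · exact sum_le_sum fun f _ => by split_ifs <;> simp [hw0]

section

variable [DecidableLE P] {w : (P → Option (Fin t)) → ℝ} {s : ℝ} {I : P → P → ℝ}

lemma IsFractionalLocalRealiser.le_sum_separates_mul (hw : IsFractionalLocalRealiser w s)
    (hI0 : ∀ x y, ¬ y ≤ x → 0 ≤ I x y) (x y : P) :
    (if ¬ y ≤ x then I x y else 0) ≤ ∑ f, (if Separates f x y then I x y else 0) * w f := by
  obtain ⟨-, hwm, hsep, -⟩ := hw
  by_cases hxy : y ≤ x
  · rw [if_neg (not_not.mpr hxy)]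
    refine (sum_eq_zero fun f _ => ?_).ge
    split_ifs with hs
    · rw [hwm f fun hf => hf.not_le_of_separates hs hxy, mul_zero]
    · rw [zero_mul]
  · rw [if_pos hxy]
    calc I x y = I x y * 1 := (mul_one _).symm
      _ ≤ I x y * ∑ f, (if Separates f x y then w f else 0) :=
        mul_le_mul_of_nonneg_left (hsep x y hxy) (hI0 x y hxy)
      _ = _ := by
        rw [mul_sum]
        exact sum_congr rfl fun f _ => by split_ifs <;> ring

theorem IsFractionalLocalRealiser.sum_le (hw : IsFractionalLocalRealiser w s)
    (hI0 : ∀ x y, ¬ y ≤ x → 0 ≤ I x y) {c : ℝ} (hc : 0 ≤ c)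
    (hI : ∀ f : P → Option (Fin t), MonotonePartial f →
      ∑ x, ∑ y, (if Separates f x y then I x y else 0) ≤ c * #(partialDomain f)) :
    ∑ x, ∑ y, (if ¬ y ≤ x then I x y else 0) ≤ c * Fintype.card P * s := by
  have hdom (f : P → Option (Fin t)) :
      (#(partialDomain f) : ℝ) * w f = ∑ x, if (f x).isSome then w f else 0 := by
    rw [← sum_filter, sum_const, nsmul_eq_mul]
    rfl
  have hpair := hw.le_sum_separates_mul hI0
  obtain ⟨hw0, hwm, -, hload⟩ := hw
  calc ∑ x, ∑ y, (if ¬ y ≤ x then I x y else 0)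
      ≤ ∑ x, ∑ y, ∑ f, (if Separates f x y then I x y else 0) * w f :=
        sum_le_sum fun x _ => sum_le_sum fun y _ => hpair x y
    _ = ∑ f, (∑ x, ∑ y, if Separates f x y then I x y else 0) * w f := by
        rw [sum_congr rfl fun x _ => sum_comm, sum_comm]
        simp only [sum_mul]
    _ ≤ ∑ f, c * #(partialDomain f) * w f := by
        refine sum_le_sum fun f _ => ?_
        by_cases hf : MonotonePartial f
        · exact mul_le_mul_of_nonneg_right (hI f hf) (hw0 f)
        · simp [hwm f hf]
    _ = c * ∑ x, ∑ f, if (f x).isSome then w f else 0 := by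
        simp only [mul_assoc, hdom, ← mul_sum]
        rw [sum_comm]
    _ ≤ c * Fintype.card P * s := by
        rw [mul_assoc, ← nsmul_eq_mul, ← card_univ, ← sum_const]
        exact mul_le_mul_of_nonneg_left (sum_le_sum fun x _ => hload x) hc

end

theorem le_fltdim [DecidableLE P] [Nonempty P] (ht : 2 ≤ t) (I : P → P → ℝ)
    (hI0 : ∀ x y, ¬ y ≤ x → 0 ≤ I x y) {c : ℝ} (hc : 0 < c)
    (hI : ∀ f : P → Option (Fin t), MonotonePartial f →
      ∑ x, ∑ y, (if Separates f x y then I x y else 0) ≤ c * #(partialDomain f)) :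
    (∑ x, ∑ y, if ¬ y ≤ x then I x y else 0) / (c * Fintype.card P) ≤ fltdim t P := by
  obtain ⟨s₀, w₀, hw₀⟩ := exists_isFractionalLocalRealiser (P := P) ht
  rw [fltdim_eq_sInf]
  refine le_csInf ⟨s₀, w₀, hw₀⟩ ?_
  rintro s ⟨w, hw⟩
  rw [div_le_iff₀ (by positivity)]
  linarith [hw.sum_le hI0 hc.le hI]

end Duality

lemma MonotonePartial.card_filter_lt_eq {P : Type*} [LinearOrder P] [Fintype P] {t : ℕ}
    {f : P → Option (Fin t)} (hf : MonotonePartial f) {y : P} {b : Fin t} (hy : f y = some b) :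
    #{x ∈ partialDomain f | x < y} = #{x | Separates f x y} + #{x ∈ level f b | x < y} := by
  rw [← card_union_of_disjoint]
  · congr 1
    ext x
    simp only [mem_union, mem_filter, mem_univ, true_and, partialDomain, level,
      separates_iff_of_eq_some hy]
    constructor
    · rintro ⟨hx, hxy⟩
      obtain ⟨a, ha⟩ := Option.isSome_iff_exists.mp hx
      rcases (hf hxy.le ha hy).lt_or_eq with hab | rfl
      · exact Or.inl ⟨a, ha, hab⟩
      · exact Or.inr ⟨ha, hxy⟩
    · rintro (⟨a, ha, hab⟩ | ⟨hx, hxy⟩)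
      · exact ⟨by simp [ha], lt_of_not_ge (hf.not_le_of_lt ha hy hab)⟩
      · exact ⟨by simp [hx], hxy⟩
  · refine disjoint_left.mpr fun x hS hR => ?_
    simp only [mem_filter, mem_univ, true_and, level, separates_iff_of_eq_some hy] at hS hR
    obtain ⟨a, ha, hab⟩ := hS
    rw [hR.1, Option.some_inj] at ha
    exact hab.ne' ha

section Chain

variable {n t : ℕ} {f : Fin n → Option (Fin t)}

lemma MonotonePartial.sum_separates_inv_sub_le (hf : MonotonePartial f) {y : Fin n} {b : Fin t}
    (hy : f y = some b) :
    ∑ x, (if Separates f x y then (((y : ℕ) : ℝ) - (x : ℕ))⁻¹ else 0)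
      ≤ harmonic #{x ∈ partialDomain f | x < y} - harmonic #{x ∈ level f b | x < y} := by
  set S : Finset (Fin n) := {x | Separates f x y}
  set R : Finset (Fin n) := {x ∈ level f b | x < y}
  have hgap : ∀ x ∈ S, (x : ℕ) + #R < y := by
    intro x hx
    simp only [mem_filter, mem_univ, true_and, S, separates_iff_of_eq_some hy] at hx
    obtain ⟨a, ha, hab⟩ := hx
    have hbetween : R ⊆ Ioo x y := by
      intro z hz
      simp only [mem_filter, mem_univ, true_and, R, level] at hz
      exact mem_Ioo.mpr ⟨lt_of_not_ge (hf.not_le_of_lt ha hz.1 hab), hz.2⟩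
    have hxy : (x : ℕ) < y := lt_of_not_ge (hf.not_le_of_lt ha hy hab)
    have := card_le_card hbetween
    rw [Fin.card_Ioo] at this
    omega
  have key := sum_inv_sub_le_harmonic_sub (S.map Fin.valEmbedding) (y := y) (r := #R)
    (by simpa using hgap)
  rw [sum_map, card_map, add_comm] at key
  rw [← sum_filter, hf.card_filter_lt_eq hy]
  exact key

theorem MonotonePartial.sum_separates_inv_sub_le_mul_card (hf : MonotonePartial f) :
    ∑ x, ∑ y, (if Separates f x y then (((y : ℕ) : ℝ) - (x : ℕ))⁻¹ else 0)
      ≤ (log t + 1 / 2) * #(partialDomain f) := by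
  have hoff : ∀ y ∉ partialDomain f,
      ∑ x, (if Separates f x y then (((y : ℕ) : ℝ) - (x : ℕ))⁻¹ else 0) = 0 := by
    intro y hy
    refine sum_eq_zero fun x _ => if_neg ?_
    rintro ⟨a, b, -, hb, -⟩
    simp [partialDomain, hb] at hy
  have hcard : #(partialDomain f) = ∑ b, #(level f b) := by
    simp only [card_eq_sum_ones]
    exact sum_partialDomain_eq_sum_level f _
  calc ∑ x, ∑ y, (if Separates f x y then (((y : ℕ) : ℝ) - (x : ℕ))⁻¹ else 0)
      = ∑ b, ∑ y ∈ level f b, ∑ x,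
          (if Separates f x y then (((y : ℕ) : ℝ) - (x : ℕ))⁻¹ else 0) := by
        rw [sum_comm, ← sum_subset (subset_univ (partialDomain f)) fun y _ hy => hoff y hy]
        exact sum_partialDomain_eq_sum_level f _
    _ ≤ ∑ b, ∑ y ∈ level f b,
          ((harmonic #{x ∈ partialDomain f | x < y} : ℝ) - harmonic #{x ∈ level f b | x < y}) := by
        gcongr with b _ y hy
        exact hf.sum_separates_inv_sub_le (by simpa [level] using hy)
    _ = (#(partialDomain f) * harmonic #(partialDomain f) - #(partialDomain f))
          - ∑ b, (#(level f b) * harmonic #(level f b) - #(level f b) : ℝ) := by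
        simp only [sum_sub_distrib, ← sum_partialDomain_eq_sum_level, sum_range_harmonic,
          sum_comp_card_filter_lt _ (fun j => (harmonic j : ℝ))]
    _ ≤ (log t + 1 / 2) * #(partialDomain f) := by
        have key := mul_harmonic_sub_sum_mul_harmonic_le (univ : Finset (Fin t))
          fun b => #(level f b)
        rw [card_univ, Fintype.card_fin, ← hcard] at key
        have hcard' : (#(partialDomain f) : ℝ) = ∑ b, (#(level f b) : ℝ) := by exact_mod_cast hcard
        rw [sum_sub_distrib]
        linarith

end Chain

lemma Fin.sum_sum_inv_sub_of_lt (n : ℕ) :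
    ∑ x : Fin n, ∑ y : Fin n, (if ¬ y ≤ x then (((y : ℕ) : ℝ) - (x : ℕ))⁻¹ else 0)
      = n * harmonic n - n := by
  have hinner (y : Fin n) :
      ∑ x : Fin n, (if x < y then (((y : ℕ) : ℝ) - (x : ℕ))⁻¹ else 0) = harmonic (y : ℕ) := by
    have hrange : {i ∈ range n | i < (y : ℕ)} = range y := by
      ext i
      simp only [mem_filter, mem_range]
      omega
    simp only [Fin.lt_def]
    rw [Fin.sum_univ_eq_sum_range (fun i => if i < (y : ℕ) then (((y : ℕ) : ℝ) - i)⁻¹ else 0),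
      ← sum_filter, hrange, sum_range_inv_sub_eq_harmonic]
  rw [sum_comm]
  simp only [not_le, hinner]
  rw [Fin.sum_univ_eq_sum_range (fun j => (harmonic j : ℝ)), sum_range_harmonic]

/-- for every `t ≥ 2` the fractional local `t`-dimension of the `n`-chain
is at least `ln n / (ln t + 1/2) − C_t`; in particular one may take
`C_t = (2 − 2γ)/(2 ln t + 1)` with `γ` Euler's constant. -/
theorem fltdim_chain_lower (t : ℕ) (ht : 2 ≤ t) :
    (∃ C : ℝ, ∀ n : ℕ, 1 ≤ n →
      Real.log n / (Real.log t + 1 / 2) - C ≤ fltdim t (Fin n)) ∧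
    ∀ n : ℕ, 1 ≤ n →
      Real.log n / (Real.log t + 1 / 2) -
          (2 - 2 * Real.eulerMascheroniConstant) / (2 * Real.log t + 1) ≤
        fltdim t (Fin n) := by
  have key (n : ℕ) (hn : 1 ≤ n) : log n / (log t + 1 / 2)
      - (2 - 2 * eulerMascheroniConstant) / (2 * log t + 1) ≤ fltdim t (Fin n) := by
    have : Nonempty (Fin n) := ⟨⟨0, hn⟩⟩
    have hβ : 0 < log t + 1 / 2 := by positivity
    have hn0 : (0 : ℝ) < n := by exact_mod_cast hn
    have hdual := le_fltdim ht (fun x y : Fin n => (((y : ℕ) : ℝ) - (x : ℕ))⁻¹)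
      (fun x y hxy => inv_nonneg.mpr (sub_nonneg.mpr (Nat.cast_le.mpr (not_le.mp hxy).le))) hβ
      fun f hf => hf.sum_separates_inv_sub_le_mul_card
    rw [Fin.sum_sum_inv_sub_of_lt, Fintype.card_fin] at hdual
    calc _ = (log n + eulerMascheroniConstant - 1) / (log t + 1 / 2) := by
          field_simp
          ring
      _ ≤ (harmonic n - 1) / (log t + 1 / 2) := by
          gcongr
          exact (log_add_eulerMascheroniConstant_lt_harmonic (by omega)).le
      _ = (n * harmonic n - n) / ((log t + 1 / 2) * n) := by
          field_simp
      _ ≤ fltdim t (Fin n) := hdual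
  exact ⟨⟨_, key⟩, key⟩
end
end

section
/- For every fixed integer k ≥ 1, as n → ∞, the fractional 2-dimension of the two-layer poset Q(n; 1, k) (elements: all 1-element and all k-element subsets of [n], ordered by inclusion) converges to (1 − 1/(k+1))^{−k}·(k+1), which is at most e(k+1). -/
open Classical Finset Real
open scoped Classical

noncomputable section

/-- The two-layer poset `Q(n; 1, k)`: all `1`-element and all `k`-element subsets of `[n]`,
ordered by inclusion. -/
def TwoLayer (n k : ℕ) : Type := {A : Finset (Fin n) // A.card = 1 ∨ A.card = k}

instance {n k : ℕ} : PartialOrder (TwoLayer n k) :=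
  inferInstanceAs (PartialOrder {A : Finset (Fin n) // A.card = 1 ∨ A.card = k})
instance {n k : ℕ} : DecidableEq (TwoLayer n k) :=
  inferInstanceAs (DecidableEq {A : Finset (Fin n) // A.card = 1 ∨ A.card = k})
instance {n k : ℕ} : Fintype (TwoLayer n k) :=
  inferInstanceAs (Fintype {A : Finset (Fin n) // A.card = 1 ∨ A.card = k})

/-!
Upper bound: for `S ⊆ [n]` let `hitting S` send `A` to the top iff `A` meets `S`. Given `p ≱ q`,
pick `y ∈ q \ p`; every `s`-set `S ∋ y` avoiding `p` separates `(p, q)`, so weighting each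
`hitting S` with `|S| = s` by `1 / C(n-k-1, s-1)` gives `ftdim ≤ C(n,s) / C(n-k-1, s-1)`.

Lower bound: a monotone `f` separates `(A, {x})` with `|A| = k`, `x ∉ A` only if `x` lies in
`T = {x | f {x} = 1}` and `A` avoids `T`; with `|T| = s` that is at most
`C(n-s, k) s ≤ kᵏ n^(k+1) / ((k+1)^(k+1) k!)` pairs (AM-GM), while there are `C(n,k)(n-k)` pairs
each needing weight `1`.

With `s = ⌊n/(k+1)⌋`, the maximiser of `s (n-s)ᵏ`, both bounds tend to
`(k+1)^(k+1) / kᵏ = (1 + 1/k)ᵏ (k+1) ≤ e (k+1)`.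
-/

open Filter Topology
open scoped Nat

section FractionalRealiser

variable {P : Type*} [Fintype P] [DecidableEq P] {t : ℕ}

def familyWeight {α : Type*} (T : Finset α) (F : α → P → Fin t) (c : ℝ) : (P → Fin t) → ℝ :=
  fun g => c * #{S ∈ T | F S = g}

theorem sum_ite_familyWeight {α : Type*} (T : Finset α) (F : α → P → Fin t) (c : ℝ)
    (Q : (P → Fin t) → Prop) [DecidablePred Q] :
    ∑ g, (if Q g then familyWeight T F c g else 0) = c * #{S ∈ T | Q (F S)} := by
  have hmaps : ∀ S ∈ T.filter (fun S => Q (F S)), F S ∈ univ.filter Q := by simp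
  rw [← sum_filter, card_eq_sum_card_fiberwise hmaps, Nat.cast_sum, mul_sum]
  refine sum_congr rfl fun g hg => ?_
  rw [familyWeight, filter_filter]
  congr 3
  exact filter_congr fun S _ => ⟨fun h => ⟨h ▸ (mem_filter.1 hg).2, h⟩, fun h => h.2⟩

theorem sum_familyWeight {α : Type*} (T : Finset α) (F : α → P → Fin t) (c : ℝ) :
    ∑ g, familyWeight T F c g = c * #T := by
  simpa using sum_ite_familyWeight T F c fun _ => True

variable [PartialOrder P]

def IsFractionalRealiser (w : (P → Fin t) → ℝ) : Prop :=
  (∀ f, 0 ≤ w f) ∧ (∀ f, ¬ Monotone f → w f = 0) ∧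
    ∀ x y : P, ¬ y ≤ x → 1 ≤ ∑ f : P → Fin t, if f x < f y then w f else 0

theorem ftdim_le_sum {w : (P → Fin t) → ℝ} (hw : IsFractionalRealiser w) :
    ftdim t P ≤ ∑ f, w f :=
  csInf_le ⟨0, by rintro _ ⟨w, hw0, -, -, rfl⟩; exact sum_nonneg fun f _ => hw0 f⟩
    ⟨w, hw.1, hw.2.1, hw.2.2, rfl⟩

theorem le_ftdim {b : ℝ} (hne : ∃ w : (P → Fin t) → ℝ, IsFractionalRealiser w)
    (hb : ∀ w : (P → Fin t) → ℝ, IsFractionalRealiser w → b ≤ ∑ f, w f) : b ≤ ftdim t P := by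
  obtain ⟨w, hw⟩ := hne
  refine le_csInf ⟨_, w, hw.1, hw.2.1, hw.2.2, rfl⟩ ?_
  rintro _ ⟨w, hw0, hwm, hws, rfl⟩
  exact hb w ⟨hw0, hwm, hws⟩

theorem isFractionalRealiser_familyWeight {α : Type*} {T : Finset α} {F : α → P → Fin t}
    {c : ℝ} (hF : ∀ S ∈ T, Monotone (F S)) (hc : 0 ≤ c)
    (hsep : ∀ x y : P, ¬ y ≤ x → 1 ≤ c * #{S ∈ T | F S x < F S y}) :
    IsFractionalRealiser (familyWeight T F c) := by
  refine ⟨fun g => by unfold familyWeight; positivity, fun g hg => ?_, fun x y hxy => ?_⟩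
  · simp only [familyWeight, mul_eq_zero, Nat.cast_eq_zero, card_eq_zero, filter_eq_empty_iff]
    exact Or.inr fun S hS hSg => hg (hSg ▸ hF S hS)
  · rw [sum_ite_familyWeight T F c (fun g => g x < g y)]
    exact hsep x y hxy

theorem card_le_mul_sum_of_isFractionalRealiser {ι : Type*} {I : Finset ι} {a b : ι → P}
    (hab : ∀ i ∈ I, ¬ b i ≤ a i) {c : ℝ}
    (hc : ∀ f : P → Fin t, Monotone f → #{i ∈ I | f (a i) < f (b i)} ≤ c)
    {w : (P → Fin t) → ℝ} (hw : IsFractionalRealiser w) :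
    #I ≤ c * ∑ f, w f := by
  obtain ⟨hw0, hwm, hws⟩ := hw
  calc (#I : ℝ) = ∑ _i ∈ I, 1 := by simp
    _ ≤ ∑ i ∈ I, ∑ f : P → Fin t, if f (a i) < f (b i) then w f else 0 :=
      sum_le_sum fun i hi => hws _ _ (hab i hi)
    _ = ∑ f : P → Fin t, #{i ∈ I | f (a i) < f (b i)} * w f := by
      rw [sum_comm]
      simp [← sum_filter]
    _ ≤ ∑ f : P → Fin t, c * w f := by
      refine sum_le_sum fun f _ => ?_
      by_cases hf : Monotone f
      · exact mul_le_mul_of_nonneg_right (hc f hf) (hw0 f)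
      · simp [hwm f hf]
    _ = c * ∑ f, w f := by rw [mul_sum]

end FractionalRealiser

theorem mul_pow_mul_le_pow_mul_add_pow (k : ℕ) {x y : ℝ} (hx : 0 ≤ x) (hy : 0 ≤ y) :
    x * y ^ k * (k + 1) ^ (k + 1) ≤ k ^ k * (x + y) ^ (k + 1) := by
  rcases k.eq_zero_or_pos with rfl | hk
  · simpa using hy
  replace hk : (0 : ℝ) < k := by exact_mod_cast hk
  have amgm := Real.geom_mean_le_arith_mean2_weighted (w₁ := 1 / (k + 1)) (w₂ := k / (k + 1))
    (p₁ := (k + 1) * x) (p₂ := (k + 1) * y / k) (by positivity) (by positivity) (by positivity)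
    (by positivity) (by field_simp; ring)
  have hsum : 1 / (k + 1) * ((k + 1) * x) + k / (k + 1) * ((k + 1) * y / k) = x + y := by
    field_simp
  rw [hsum] at amgm
  have := pow_le_pow_left₀ (by positivity) amgm (k + 1)
  rw [mul_pow, ← Real.rpow_natCast, ← Real.rpow_natCast (_ ^ ((k : ℝ) / (k + 1))),
    ← Real.rpow_mul (by positivity), ← Real.rpow_mul (by positivity)] at this
  have e1 : 1 / ((k : ℝ) + 1) * ((k + 1 : ℕ) : ℝ) = 1 := by push_cast; field_simp
  have e2 : (k : ℝ) / (k + 1) * ((k + 1 : ℕ) : ℝ) = k := by push_cast; field_simp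
  rw [e1, e2, Real.rpow_one, Real.rpow_natCast, div_pow] at this
  rw [← div_le_iff₀' (by positivity)]
  convert this using 1
  rw [mul_pow]
  field_simp
  ring

theorem choose_sub_mul_le {n s : ℕ} (k : ℕ) (hs : s ≤ n) :
    ((n - s).choose k * s : ℝ) ≤ k ^ k * n ^ (k + 1) / ((k + 1) ^ (k + 1) * k !) := by
  have hsn : (s : ℝ) ≤ n := by exact_mod_cast hs
  have amgm := mul_pow_mul_le_pow_mul_add_pow k (Nat.cast_nonneg s) (sub_nonneg.2 hsn)
  rw [add_sub_cancel] at amgm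
  calc ((n - s).choose k * s : ℝ) ≤ (n - s : ℝ) ^ k / k ! * s := by
        gcongr
        simpa [Nat.cast_sub hs] using Nat.choose_le_pow_div (α := ℝ) k (n - s)
    _ = s * (n - s : ℝ) ^ k * (k + 1) ^ (k + 1) / ((k + 1) ^ (k + 1) * k !) := by
        field_simp
    _ ≤ k ^ k * n ^ (k + 1) / ((k + 1) ^ (k + 1) * k !) := by gcongr

theorem choose_mul_descFactorial_eq (a b k : ℕ) :
    (a + b + k + 1).choose (a + 1) * (a + 1) * (b + k).descFactorial k
      = (a + b).choose a * (a + b + k + 1).descFactorial (k + 1) := by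
  induction k with
  | zero => simpa [mul_comm] using (Nat.add_one_mul_choose_eq (a + b) a).symm
  | succ k ih =>
    have h := Nat.choose_mul_succ_eq (a + b + k + 1) (a + 1)
    rw [show a + b + k + 1 + 1 - (a + 1) = b + k + 1 by omega] at h
    rw [show a + b + (k + 1) + 1 = a + b + k + 1 + 1 by ring, show b + (k + 1) = b + k + 1 by ring,
      Nat.succ_descFactorial_succ, Nat.succ_descFactorial_succ]
    calc _ = (a + b + k + 1 + 1).choose (a + 1) * (b + k + 1) * (a + 1)
          * (b + k).descFactorial k := by ring
      _ = (a + b + k + 1 + 1)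
          * ((a + b + k + 1).choose (a + 1) * (a + 1) * (b + k).descFactorial k) := by
          rw [← h]; ring
      _ = _ := by rw [ih]; ring

theorem choose_div_choose_eq {n k s : ℕ} (hs : 1 ≤ s) (hsn : s + k ≤ n) :
    (n.choose s : ℝ) / (n - k - 1).choose (s - 1)
      = n.descFactorial (k + 1) / (s * (n - s).descFactorial k) := by
  obtain ⟨a, rfl⟩ : ∃ a, s = a + 1 := ⟨s - 1, by omega⟩
  obtain ⟨b, rfl⟩ : ∃ b, n = a + b + k + 1 := ⟨n - k - 1 - a, by omega⟩
  rw [show a + b + k + 1 - k - 1 = a + b by omega, show a + 1 - 1 = a by omega,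
    show a + b + k + 1 - (a + 1) = b + k by omega, div_eq_div_iff]
  · exact_mod_cast (mul_assoc _ _ _).symm.trans (choose_mul_descFactorial_eq a b k) |>.trans
      (mul_comm _ _)
  · exact_mod_cast (Nat.choose_pos (by omega)).ne'
  · exact_mod_cast (Nat.mul_pos (by omega) (Nat.descFactorial_pos.2 (by omega))).ne'

theorem tendsto_descFactorial_div_pow (j : ℕ) :
    Tendsto (fun m : ℕ => (m.descFactorial j : ℝ) / m ^ j) atTop (𝓝 1) := by
  induction j with
  | zero => simp
  | succ j ih =>
    have h : Tendsto (fun m : ℕ => 1 - (j : ℝ) / m) atTop (𝓝 1) := by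
      simpa using tendsto_const_nhds.sub (tendsto_const_div_atTop_nhds_zero_nat (j : ℝ))
    refine Tendsto.congr' ?_ (by simpa using h.mul ih)
    filter_upwards [eventually_gt_atTop j] with m hm
    have hm0 : (m : ℝ) ≠ 0 := by exact_mod_cast (Nat.zero_lt_of_lt hm).ne'
    rw [Nat.descFactorial_succ, Nat.cast_mul, Nat.cast_sub hm.le, pow_succ]
    field_simp

theorem tendsto_natDiv_div_self (d : ℕ) :
    Tendsto (fun n : ℕ => ((n / d : ℕ) : ℝ) / n) atTop (𝓝 (1 / d)) := by
  rcases d.eq_zero_or_pos with rfl | hd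
  · simp
  have hd : (0 : ℝ) < d := by exact_mod_cast hd
  have h := (tendsto_nat_floor_div_atTop (R := ℝ)).comp
    ((tendsto_natCast_atTop_atTop (R := ℝ)).atTop_div_const hd)
  refine Tendsto.congr' ?_ (by simpa using h.div_const (d : ℝ))
  filter_upwards [eventually_gt_atTop 0] with n hn
  have hn : (n : ℝ) ≠ 0 := by positivity
  simp only [Nat.floor_div_eq_div]
  field_simp

theorem eventually_one_le_div_and_div_add_le {k : ℕ} (hk : 1 ≤ k) :
    ∀ᶠ n : ℕ in atTop, 1 ≤ n / (k + 1) ∧ n / (k + 1) + k ≤ n := by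
  filter_upwards [eventually_ge_atTop (2 * (k + 1))] with n hn
  have h2 : 2 ≤ n / (k + 1) := (Nat.le_div_iff_mul_le (by omega)).2 (by linarith)
  have hmul := Nat.div_mul_le_self n (k + 1)
  exact ⟨by omega, by nlinarith⟩

theorem tendsto_descFactorial_div_div_mul_descFactorial {k : ℕ} (hk : 1 ≤ k) :
    Tendsto (fun n : ℕ => (n.descFactorial (k + 1) : ℝ)
        / ((n / (k + 1) : ℕ) * (n - n / (k + 1)).descFactorial k))
      atTop (𝓝 ((k + 1) ^ (k + 1) / k ^ k)) := by
  have hk0 : (0 : ℝ) < k := by exact_mod_cast hk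
  have hs : Tendsto (fun n : ℕ => ((n / (k + 1) : ℕ) : ℝ) / n) atTop (𝓝 (1 / (k + 1))) := by
    simpa using tendsto_natDiv_div_self (k + 1)
  have hm : Tendsto (fun n : ℕ => ((n - n / (k + 1) : ℕ) : ℝ) / n) atTop
      (𝓝 (k / (k + 1))) := by
    have hlim : (1 : ℝ) - 1 / (k + 1) = k / (k + 1) := by field_simp; ring
    refine (hlim ▸ tendsto_const_nhds.sub hs).congr' ?_
    filter_upwards [eventually_gt_atTop 0] with n hn
    have hn : (n : ℝ) ≠ 0 := by exact_mod_cast hn.ne'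
    rw [Nat.cast_sub (Nat.div_le_self n _)]
    field_simp
  have hmtop : Tendsto (fun n : ℕ => n - n / (k + 1)) atTop atTop := by
    refine tendsto_atTop_mono (fun n => ?_) (Nat.tendsto_div_const_atTop two_ne_zero)
    have := Nat.div_le_div_left (a := n) (show 2 ≤ k + 1 by omega) two_pos
    omega
  -- with `s = n / (k + 1)` and `m = n - s`, the expression is
  -- `(n^↓(k+1) / n^(k+1)) / ((s / n) * (m^↓k / m^k) * (m / n)^k)`
  have hlim := (tendsto_descFactorial_div_pow (k + 1)).div
    ((hs.mul ((tendsto_descFactorial_div_pow k).comp hmtop)).mul (hm.pow k)) (by positivity)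
  convert hlim.congr' ?_ using 2
  · rw [div_pow, mul_one]
    field_simp
    ring
  · filter_upwards [eventually_one_le_div_and_div_add_le hk] with n ⟨h1, h2⟩
    have hn : (n : ℝ) ≠ 0 := by exact_mod_cast (show n ≠ 0 by omega)
    have hs0 : ((n / (k + 1) : ℕ) : ℝ) ≠ 0 := by exact_mod_cast (show n / (k + 1) ≠ 0 by omega)
    have hm0 : ((n - n / (k + 1) : ℕ) : ℝ) ≠ 0 := by
      exact_mod_cast (show n - n / (k + 1) ≠ 0 by omega)
    have hE : ((n - n / (k + 1)).descFactorial k : ℝ) ≠ 0 := by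
      exact_mod_cast (Nat.descFactorial_pos.2 (by omega)).ne'
    simp only [Pi.div_apply, Function.comp_apply, div_pow]
    field_simp
    ring

namespace TwoLayer

variable {n k : ℕ}

def single (x : Fin n) : TwoLayer n k := ⟨{x}, Or.inl (card_singleton x)⟩

def ofCard (A : {A : Finset (Fin n) // #A = k}) : TwoLayer n k := ⟨A.1, Or.inr A.2⟩

/-- The extension `A ↦ max_{a ∈ A} f a` of the map `f : [n] → {1, 2}` with `f⁻¹ {2} = S`. -/
def hitting (S : Finset (Fin n)) : TwoLayer n k → Fin 2 :=
  fun A => if Disjoint A.1 S then 0 else 1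

theorem monotone_hitting (S : Finset (Fin n)) : Monotone (hitting (k := k) S) := by
  intro A B hAB
  unfold hitting
  split_ifs with hA hB hB
  · exact le_rfl
  · exact Fin.zero_le _
  · exact absurd (hB.mono_left (show A.1 ⊆ B.1 from hAB)) hA
  · exact le_rfl

theorem hitting_lt_hitting {S : Finset (Fin n)} {A B : TwoLayer n k}
    (hA : Disjoint A.1 S) (hB : ¬ Disjoint B.1 S) : hitting S A < hitting S B := by
  simp [hitting, hA, hB]

theorem choose_le_card_hitting_lt (hk : 1 ≤ k) {s : ℕ} (hs : 1 ≤ s) {p q : TwoLayer n k}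
    (hpq : ¬ q ≤ p) :
    (n - k - 1).choose (s - 1) ≤ #{S ∈ powersetCard s univ | hitting S p < hitting S q} := by
  obtain ⟨y, hyq, hyp⟩ := not_subset.1 hpq
  have hp : #p.1 ≤ k := by rcases p.2 with h | h <;> omega
  calc (n - k - 1).choose (s - 1) ≤ (n - (#p.1 + 1)).choose (s - 1) :=
        Nat.choose_le_choose _ (by omega)
    _ = #(powersetCard (s - 1) (insert y p.1)ᶜ) := by
      rw [card_powersetCard, card_compl, card_insert_of_notMem hyp, Fintype.card_fin]
    _ ≤ _ := by
      refine card_le_card_of_injOn (insert y) (fun A hA => ?_) (fun A hA B hB hAB => ?_)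
      · rw [mem_coe, mem_powersetCard, subset_compl_iff_disjoint_right, disjoint_insert_right]
          at hA
        obtain ⟨⟨hyA, hAp⟩, hAcard⟩ := hA
        simp only [mem_coe, mem_filter, mem_powersetCard, subset_univ, true_and]
        refine ⟨by rw [card_insert_of_notMem hyA]; omega, hitting_lt_hitting ?_ ?_⟩
        · exact disjoint_insert_right.2 ⟨hyp, hAp.symm⟩
        · exact not_disjoint_iff.2 ⟨y, hyq, mem_insert_self y A⟩
      · have hyA : y ∉ A := fun h => mem_compl.1 ((mem_powersetCard.1 hA).1 h) (mem_insert_self _ _)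
        have hyB : y ∉ B := fun h => mem_compl.1 ((mem_powersetCard.1 hB).1 h) (mem_insert_self _ _)
        rw [← erase_insert hyA, ← erase_insert hyB]
        exact congrArg (·.erase y) hAB

theorem isFractionalRealiser_hitting (hk : 1 ≤ k) {s : ℕ} (hs : 1 ≤ s) (hsn : s + k ≤ n) :
    IsFractionalRealiser (familyWeight (powersetCard s univ) (hitting (n := n) (k := k))
      ((n - k - 1).choose (s - 1) : ℝ)⁻¹) := by
  have hC : (0 : ℝ) < (n - k - 1).choose (s - 1) := by
    exact_mod_cast Nat.choose_pos (by omega)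
  refine isFractionalRealiser_familyWeight (fun S _ => monotone_hitting S) (by positivity)
    fun p q hpq => ?_
  rw [inv_mul_eq_div, one_le_div hC]
  exact_mod_cast choose_le_card_hitting_lt hk hs hpq

theorem ftdim_le_choose_div_choose (hk : 1 ≤ k) {s : ℕ} (hs : 1 ≤ s) (hsn : s + k ≤ n) :
    ftdim 2 (TwoLayer n k) ≤ n.choose s / (n - k - 1).choose (s - 1) := by
  refine (ftdim_le_sum (isFractionalRealiser_hitting hk hs hsn)).trans_eq ?_
  rw [sum_familyWeight, card_powersetCard, card_univ, Fintype.card_fin, inv_mul_eq_div]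

/-- The support of the fractional 2-antirealiser. -/
def nonIncidentPairs (n k : ℕ) : Finset ((_ : {A : Finset (Fin n) // #A = k}) × Fin n) :=
  univ.sigma fun A => A.1ᶜ

theorem card_nonIncidentPairs : #(nonIncidentPairs n k) = n.choose k * (n - k) := by
  rw [nonIncidentPairs, card_sigma, sum_congr rfl fun A _ => by rw [card_compl, A.2], sum_const,
    card_univ, Fintype.card_finset_len, Fintype.card_fin, smul_eq_mul]

theorem card_separated_le {f : TwoLayer n k → Fin 2} (hf : Monotone f) :
    #{i ∈ nonIncidentPairs n k | f (ofCard i.1) < f (single i.2)}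
      ≤ (n - #{x | f (single x) = 1}).choose k * #{x | f (single x) = 1} := by
  set S : Finset (Fin n) := {x | f (single x) = 1}
  calc _ ≤ #(powersetCard k Sᶜ ×ˢ S) := by
        refine card_le_card_of_injOn (fun i => (i.1.1, i.2)) (fun ⟨A, x⟩ hAx => ?_)
          (fun ⟨A, x⟩ _ ⟨B, y⟩ _ h => ?_)
        · simp only [mem_coe, mem_filter] at hAx
          have hlt : f (ofCard A) = 0 ∧ f (single x) = 1 := by omega
          simp only [mem_coe, mem_product, mem_powersetCard, A.2, and_true]
          refine ⟨fun a ha => ?_, by simpa [S] using hlt.2⟩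
          have : f (single a) ≤ f (ofCard A) := hf (singleton_subset_iff.2 ha)
          simp only [S, mem_compl, mem_filter, mem_univ, true_and]
          omega
        · simp only [Prod.mk.injEq] at h
          obtain ⟨h1, rfl⟩ := h
          rw [Subtype.ext h1]
    _ = _ := by rw [card_product, card_powersetCard, card_compl, Fintype.card_fin]

theorem descFactorial_div_pow_mul_le_ftdim
    (hne : ∃ w : (TwoLayer n k → Fin 2) → ℝ, IsFractionalRealiser w) :
    (n.descFactorial (k + 1) : ℝ) / n ^ (k + 1) * ((k + 1) ^ (k + 1) / k ^ k)
      ≤ ftdim 2 (TwoLayer n k) := by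
  refine le_ftdim hne fun w hw => ?_
  have hcard := card_le_mul_sum_of_isFractionalRealiser (I := nonIncidentPairs n k)
    (a := fun i => ofCard i.1) (b := fun i => single i.2)
    (fun ⟨A, x⟩ hx h => mem_compl.1 (mem_sigma.1 hx).2 (singleton_subset_iff.1 h))
    (fun f hf => (Nat.cast_le.2 (card_separated_le hf)).trans
      (by push_cast; exact choose_sub_mul_le k (card_le_univ _ |>.trans_eq (Fintype.card_fin n))))
    hw
  have hD : (n.descFactorial (k + 1) : ℝ) = #(nonIncidentPairs n k) * k ! := by
    rw [card_nonIncidentPairs, Nat.descFactorial_succ, Nat.descFactorial_eq_factorial_mul_choose]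
    push_cast
    ring
  calc _ = #(nonIncidentPairs n k) / (k ^ k * n ^ (k + 1) / ((k + 1) ^ (k + 1) * k !) : ℝ) := by
        rw [hD, div_div_eq_mul_div]
        ring
    _ ≤ ∑ f, w f := div_le_of_le_mul₀ (by positivity) (sum_nonneg fun f _ => hw.1 f)
      (hcard.trans_eq (mul_comm _ _))

end TwoLayer

open Filter in
/-- for fixed `k ≥ 1`, as `n → ∞` the fractional 2-dimension of
`Q(n; 1, k)` converges to `(1 − 1/(k+1))⁻ᵏ·(k+1)`, which is at most `e(k+1)`. -/
theorem ftdim_two_layer (k : ℕ) (hk : 1 ≤ k) :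
    Tendsto (fun n : ℕ => ftdim 2 (TwoLayer n k)) atTop
      (nhds (((1 - 1 / ((k : ℝ) + 1)) ^ k)⁻¹ * ((k : ℝ) + 1))) ∧
    ((1 - 1 / ((k : ℝ) + 1)) ^ k)⁻¹ * ((k : ℝ) + 1) ≤ Real.exp 1 * ((k : ℝ) + 1) := by
  have hk0 : (k : ℝ) ≠ 0 := by positivity
  have hbase : ((1 - 1 / ((k : ℝ) + 1)) ^ k)⁻¹ = (1 + (k : ℝ)⁻¹) ^ k := by
    rw [← inv_pow, show (1 : ℝ) - 1 / (k + 1) = (1 + (k : ℝ)⁻¹)⁻¹ by field_simp; ring, inv_inv]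
  refine ⟨?_, by rw [hbase]; gcongr; exact Real.one_add_inv_pow_le_exp⟩
  have hL : (1 + (k : ℝ)⁻¹) ^ k * (k + 1) = (k + 1) ^ (k + 1) / k ^ k := by
    rw [inv_eq_one_div, one_add_div hk0, div_pow]
    field_simp
    ring
  rw [hbase, hL]
  have hlower := (tendsto_descFactorial_div_pow (k + 1)).mul_const (((k : ℝ) + 1) ^ (k + 1) / k ^ k)
  rw [one_mul] at hlower
  refine tendsto_of_tendsto_of_tendsto_of_le_of_le' hlower
    (tendsto_descFactorial_div_div_mul_descFactorial hk) ?_ ?_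
  all_goals filter_upwards [eventually_one_le_div_and_div_add_le hk] with n ⟨hs, hsn⟩
  · exact TwoLayer.descFactorial_div_pow_mul_le_ftdim
      ⟨_, TwoLayer.isFractionalRealiser_hitting hk hs hsn⟩
  · exact (TwoLayer.ftdim_le_choose_div_choose hk hs hsn).trans_eq (choose_div_choose_eq hs hsn)
end
end
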